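/- arXiv:2109.01198 — 8 statements merged into one kernel-verified Lean document; each statement's English description precedes it below -/
import Mathlib

section
/- Let G be a finite abelian group of odd order (written additively) and let σ : G → G be a group automorphism satisfying σ(σ(x)) = −x for all x ∈ G. Then for every nonzero x ∈ G the four elements x, σ(x), −x, −σ(x) are pairwise distinct, so every orbit of the cyclic group generated by σ on G other than {0} has exactly 4 elements; consequently the order of G is congruent to 1 modulo 4. -/
/-- If `G` is a finite abelian group of odd order and `σ` is an
automorphism with `σ (σ x) = -x`, then for every nonzero `x` the four elements
`x, σ x, -x, -σ x` are pairwise distinct, every orbit of the cyclic group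
generated by `σ` other than `{0}` has exactly 4 elements, and `|G| ≡ 1 (mod 4)`. -/
theorem snak_orbits_order_four {G : Type*} [AddCommGroup G] [Fintype G]
    (hodd : Odd (Fintype.card G)) (σ : AddAut G) (hσ : ∀ x : G, σ (σ x) = -x) :
    (∀ x : G, x ≠ 0 →
      (x ≠ σ x ∧ x ≠ -x ∧ x ≠ -σ x ∧ σ x ≠ -x ∧ σ x ≠ -σ x ∧ (-x : G) ≠ -σ x)) ∧
    (∀ x : G, x ≠ 0 →
      (AddAction.orbit (AddSubgroup.zmultiples σ) x).ncard = 4) ∧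
    Fintype.card G % 4 = 1 := by
  classical
  -- G has no 2-torsion
  have h2 : ∀ x : G, x + x = 0 → x = 0 := by
    intro x hx
    have h1 : addOrderOf x ∣ 2 :=
      addOrderOf_dvd_of_nsmul_eq_zero (by simpa [two_nsmul] using hx)
    have hdc : addOrderOf x ∣ Fintype.card G := addOrderOf_dvd_card
    have hgcd : addOrderOf x ∣ Nat.gcd 2 (Fintype.card G) := Nat.dvd_gcd h1 hdc
    have hg : Nat.gcd 2 (Fintype.card G) = 1 := by
      rcases hodd with ⟨k, hk⟩
      have hmod : Fintype.card G % 2 = 1 := by omega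
      rw [Nat.gcd_rec, hmod]
      rfl
    rw [hg, Nat.dvd_one] at hgcd
    exact AddMonoid.addOrderOf_eq_one_iff.mp hgcd
  have h2' : ∀ x : G, x = -x → x = 0 := fun x h =>
    h2 x (by nth_rewrite 2 [h]; simp)
  have hinj : Function.Injective (σ : G → G) := σ.injective
  -- pairwise distinctness
  have hdist : ∀ x : G, x ≠ 0 →
      (x ≠ σ x ∧ x ≠ -x ∧ x ≠ -σ x ∧ σ x ≠ -x ∧ σ x ≠ -σ x ∧ (-x : G) ≠ -σ x) := by
    intro x hx
    have hσx0 : σ x ≠ 0 := fun h => hx (hinj (by simpa using h))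
    have hA : x ≠ σ x := by
      intro h
      have h3 := congrArg σ h
      rw [hσ x] at h3
      exact hx (h2' x (h.trans h3))
    have hB : x ≠ -x := fun h => hx (h2' x h)
    have hC : x ≠ -σ x := by
      intro h
      have h3 := congrArg σ h
      rw [map_neg, hσ x, neg_neg] at h3
      exact hA h3.symm
    have hD : σ x ≠ -x := by
      intro h
      apply hA
      have h3 : σ (σ x) = σ (-x) := by rw [h]
      rw [hσ x, map_neg] at h3
      exact neg_injective h3
    have hE : σ x ≠ -σ x := fun h => hσx0 (h2' _ h)
    have hF : (-x : G) ≠ -σ x := fun h => hA (neg_injective h)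
    exact ⟨hA, hB, hC, hD, hE, hF⟩
  -- natural powers of σ
  have hap2 : ∀ y : G, ((2 : ℕ) • σ) y = -y := by
    intro y
    rw [two_nsmul, AddAut.mul_apply, hσ]
  have hap3 : ∀ y : G, ((3 : ℕ) • σ) y = -σ y := by
    intro y
    rw [show (3 : ℕ) = 2 + 1 by norm_num, succ_nsmul, AddAut.mul_apply,
      hap2 (σ y)]
  have hσ4 : (4 : ℕ) • σ = 0 := by
    ext y
    rw [show (4 : ℕ) = 3 + 1 by norm_num, succ_nsmul, AddAut.mul_apply,
      hap3 (σ y), hσ y, neg_neg, AddAut.one_apply]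
  -- integer powers of σ
  have hz : ∀ n : ℤ, ∃ r : ℤ, 0 ≤ r ∧ r < 4 ∧ n • σ = r • σ := by
    intro n
    refine ⟨n % 4, Int.emod_nonneg n (by norm_num), Int.emod_lt_of_pos n (by norm_num), ?_⟩
    have h4z : (4 : ℤ) • σ = 0 := by
      rw [show (4 : ℤ) = ((4 : ℕ) : ℤ) by norm_num, natCast_zsmul, hσ4]
    conv_lhs => rw [← Int.emod_add_mul_ediv n 4]
    rw [add_zsmul, mul_zsmul', h4z, zsmul_zero, add_zero]
  have hz2 : ∀ y : G, ((2 : ℤ) • σ) y = -y := by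
    intro y
    rw [show (2 : ℤ) = ((2 : ℕ) : ℤ) by norm_num, natCast_zsmul, hap2]
  have hz3 : ∀ y : G, ((3 : ℤ) • σ) y = -σ y := by
    intro y
    rw [show (3 : ℤ) = ((3 : ℕ) : ℤ) by norm_num, natCast_zsmul, hap3]
  -- orbit description
  have horb : ∀ x : G, AddAction.orbit (AddSubgroup.zmultiples σ) x
      = {x, σ x, -x, -σ x} := by
    intro x
    ext y
    constructor
    · rintro ⟨⟨g, hg⟩, rfl⟩
      rcases hg with ⟨n, rfl⟩
      obtain ⟨r, hr0, hr4, hmod⟩ := hz n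
      show (n • σ) x ∈ ({x, σ x, -x, -σ x} : Set G)
      rw [hmod]
      interval_cases r
      · left; simp
      · right; left; simp
      · right; right; left; exact hz2 x
      · right; right; right; exact hz3 x
    · intro hy
      rcases hy with rfl | rfl | rfl | rfl
      · exact ⟨⟨(0 : ℤ) • σ, 0, rfl⟩, by simp⟩
      · exact ⟨⟨(1 : ℤ) • σ, 1, rfl⟩, by simp⟩
      · exact ⟨⟨(2 : ℤ) • σ, 2, rfl⟩, hz2 x⟩
      · exact ⟨⟨(3 : ℤ) • σ, 3, rfl⟩, hz3 x⟩
  -- orbit cardinality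
  have horbcard : ∀ x : G, x ≠ 0 →
      (AddAction.orbit (AddSubgroup.zmultiples σ) x).ncard = 4 := by
    intro x hx
    obtain ⟨hA, hB, hC, hD, hE, hF⟩ := hdist x hx
    rw [horb x]
    rw [Set.ncard_insert_of_notMem (by simp [hA, hB, hC]) (Set.toFinite _),
      Set.ncard_insert_of_notMem (by simp [hD, hE]) (Set.toFinite _),
      Set.ncard_insert_of_notMem (by simp [hF]) (Set.toFinite _),
      Set.ncard_singleton]
  -- counting: the nonzero elements split into quadruples
  have key : ∀ n : ℕ, ∀ s : Finset G, s.card = n → (0 : G) ∉ s →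
      (∀ x ∈ s, σ x ∈ s) → 4 ∣ s.card := by
    intro n
    induction n using Nat.strong_induction_on with
    | _ n ih =>
      intro s hcard h0 hcl
      rcases s.eq_empty_or_nonempty with rfl | ⟨x, hx⟩
      · simp
      have hx0 : x ≠ 0 := fun h => h0 (h ▸ hx)
      obtain ⟨hA, hB, hC, hD, hE, hF⟩ := hdist x hx0
      have hσx : σ x ∈ s := hcl x hx
      have hσσx : (-x : G) ∈ s := by
        have := hcl _ hσx
        rwa [hσ x] at this
      have hσ3x : (-σ x : G) ∈ s := by
        have := hcl _ hσσx
        rwa [map_neg] at this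
      set q : Finset G := {x, σ x, -x, -σ x} with hq
      have hqsub : q ⊆ s := by
        intro y hy
        simp only [hq, Finset.mem_insert, Finset.mem_singleton] at hy
        rcases hy with rfl | rfl | rfl | rfl <;> assumption
      have hqcard : q.card = 4 := by
        rw [hq]
        rw [Finset.card_insert_of_notMem (by simp [hA, hB, hC]),
          Finset.card_insert_of_notMem (by simp [hD, hE]),
          Finset.card_insert_of_notMem (by simp [hF]),
          Finset.card_singleton]
      set t := s \ q with ht
      have htcard : t.card = s.card - 4 := by
        rw [ht, Finset.card_sdiff_of_subset hqsub, hqcard]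
      have hscard : s.card = t.card + 4 := by
        have h4le : 4 ≤ s.card := hqcard ▸ Finset.card_le_card hqsub
        omega
      have ht0 : (0 : G) ∉ t := fun h => h0 (Finset.mem_sdiff.mp h).1
      have htcl : ∀ y ∈ t, σ y ∈ t := by
        intro y hy
        rcases Finset.mem_sdiff.mp hy with ⟨hys, hyq⟩
        rw [ht, Finset.mem_sdiff]
        refine ⟨hcl y hys, ?_⟩
        intro hmem
        simp only [hq, Finset.mem_insert, Finset.mem_singleton] at hmem hyq
        rcases hmem with h | h | h | h
        · have : y = -σ x := hinj (by rw [h, map_neg, hσ x, neg_neg])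
          exact hyq (Or.inr (Or.inr (Or.inr this)))
        · exact hyq (Or.inl (hinj h))
        · have : y = σ x := hinj (by rw [h, ← hσ x])
          exact hyq (Or.inr (Or.inl this))
        · have : y = -x := hinj (by rw [h, map_neg])
          exact hyq (Or.inr (Or.inr (Or.inl this)))
      have hlt : t.card < n := by omega
      have := ih t.card hlt t rfl ht0 htcl
      omega
  have hdvd : 4 ∣ (Finset.univ.erase (0 : G)).card := by
    refine key _ _ rfl (Finset.notMem_erase _ _) ?_
    intro x hx
    rw [Finset.mem_erase] at hx ⊢
    refine ⟨fun h => hx.1 (hinj (by simpa using h)), Finset.mem_univ _⟩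
  have hcarderase : (Finset.univ.erase (0 : G)).card = Fintype.card G - 1 := by
    rw [Finset.card_erase_of_mem (Finset.mem_univ _), Finset.card_univ]
  have hpos : 1 ≤ Fintype.card G := Fintype.card_pos
  refine ⟨hdist, horbcard, ?_⟩
  rw [hcarderase] at hdvd
  omega
end

section
/- Let G be a finite abelian group of odd order and let σ : G → G be a group automorphism satisfying σ(σ(x)) = −x for all x ∈ G. If H is a subgroup of G with σ(H) = H, then the order of H is congruent to 1 modulo 4. -/
/-- Auxiliary: if `f⁴ = id` on a type, and `s` is a finset closed under `f`
on which `f` and `f ∘ f` have no fixed points, then `4 ∣ s.card`. -/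
lemma snak_aux {α : Type*} [DecidableEq α] (f : α → α)
    (h4 : ∀ x, f (f (f (f x))) = x) :
    ∀ n (s : Finset α), s.card = n → (∀ x ∈ s, f x ∈ s) →
      (∀ x ∈ s, f x ≠ x) → (∀ x ∈ s, f (f x) ≠ x) → 4 ∣ s.card := by
  have finj : Function.Injective f := by
    intro a b hab
    have := h4 a
    rw [hab, h4 b] at this
    exact this.symm
  intro n
  induction n using Nat.strong_induction_on with
  | _ n ih =>
    intro s hcard hcl hf1 hf2
    rcases Finset.eq_empty_or_nonempty s with rfl | ⟨x, hx⟩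
    · simp
    · have hfx : f x ∈ s := hcl x hx
      have hffx : f (f x) ∈ s := hcl _ hfx
      have hfffx : f (f (f x)) ∈ s := hcl _ hffx
      have h1 : f x ≠ x := hf1 x hx
      have h2 : f (f x) ≠ x := hf2 x hx
      have h3 : f (f (f x)) ≠ x := by
        intro h
        apply h1
        have := congrArg f h
        rw [h4] at this
        exact this.symm
      have h12 : f (f x) ≠ f x := fun h => h1 (finj h)
      have h13 : f (f (f x)) ≠ f x := fun h => h2 (finj h)
      have h23 : f (f (f x)) ≠ f (f x) := fun h => h1 (finj (finj h))
      set t : Finset α := s \ {x, f x, f (f x), f (f (f x))} with ht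
      have hsub : ({x, f x, f (f x), f (f (f x))} : Finset α) ⊆ s := by
        intro y hy
        simp only [Finset.mem_insert, Finset.mem_singleton] at hy
        rcases hy with rfl | rfl | rfl | rfl <;> assumption
      have hcard4 : ({x, f x, f (f x), f (f (f x))} : Finset α).card = 4 := by
        rw [Finset.card_insert_of_notMem, Finset.card_insert_of_notMem,
          Finset.card_insert_of_notMem, Finset.card_singleton]
        · simp [Ne.symm h23]
        · simp [Ne.symm h12, Ne.symm h13]
        · simp [Ne.symm h1, Ne.symm h2, Ne.symm h3]
      have htcard : t.card = s.card - 4 := by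
        rw [ht, Finset.card_sdiff_of_subset hsub, hcard4]
      have htcl : ∀ y ∈ t, f y ∈ t := by
        intro y hy
        rw [ht, Finset.mem_sdiff] at hy ⊢
        obtain ⟨hys, hyn⟩ := hy
        refine ⟨hcl y hys, ?_⟩
        simp only [Finset.mem_insert, Finset.mem_singleton] at hyn ⊢
        push_neg at hyn ⊢
        obtain ⟨n0, n1, n2, n3⟩ := hyn
        refine ⟨?_, fun h => n0 (finj h), fun h => n1 (finj h), fun h => n2 (finj h)⟩
        intro h
        apply n3
        have : f y = f (f (f (f x))) := by rw [h4]; exact h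
        exact finj this
      have hlt : t.card < n := by
        have hpos : 0 < s.card := Finset.card_pos.mpr ⟨x, hx⟩
        omega
      have hdvd : 4 ∣ t.card :=
        ih t.card hlt t rfl htcl (fun y hy => hf1 y (Finset.mem_sdiff.mp hy).1)
          (fun y hy => hf2 y (Finset.mem_sdiff.mp hy).1)
      have hscard : s.card = t.card + 4 := by
        have h4le : 4 ≤ s.card := hcard4 ▸ Finset.card_le_card hsub
        omega
      rw [hscard]
      exact Nat.dvd_add hdvd ⟨1, rfl⟩

/-- If `G` is a finite abelian group of odd order, `σ` an
automorphism with `σ (σ x) = -x`, and `H ≤ G` a subgroup with `σ(H) = H`,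
then `|H| ≡ 1 (mod 4)`. -/
theorem snak_invariant_subgroup_card {G : Type*} [AddCommGroup G] [Fintype G]
    (hodd : Odd (Fintype.card G)) (σ : AddAut G) (hσ : ∀ x : G, σ (σ x) = -x)
    (H : AddSubgroup G) (hH : ⇑σ '' (H : Set G) = (H : Set G)) :
    Nat.card H % 4 = 1 := by
  classical
  -- no 2-torsion in G
  have htwo : ∀ x : G, x + x = 0 → x = 0 := by
    intro x hx
    have h2 : addOrderOf x ∣ 2 := by
      apply addOrderOf_dvd_of_nsmul_eq_zero
      rw [two_nsmul]; exact hx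
    have hcd : addOrderOf x ∣ Fintype.card G := addOrderOf_dvd_card
    have hoddo : Odd (addOrderOf x) := hodd.of_dvd_nat hcd
    rcases (Nat.dvd_prime Nat.prime_two).mp h2 with h | h
    · rwa [AddMonoid.addOrderOf_eq_one_iff] at h

    · rw [h, Nat.odd_iff] at hoddo; simp at hoddo
  have hmem : ∀ x : G, x ∈ H → σ x ∈ H := by
    intro x hx
    have : σ x ∈ ⇑σ '' (H : Set G) := ⟨x, hx, rfl⟩
    rwa [hH] at this
  have h4 : ∀ x : G, σ (σ (σ (σ x))) = x := by
    intro x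
    rw [hσ, hσ]; simp
  -- the finset of nonzero elements of H
  set s : Finset G := ((H : Set G).toFinset).erase 0 with hs
  have hmem_s : ∀ x : G, x ∈ s ↔ x ∈ H ∧ x ≠ 0 := by
    intro x
    simp [hs, Finset.mem_erase, Set.mem_toFinset, and_comm]
  have hcl : ∀ x ∈ s, σ x ∈ s := by
    intro x hx
    rw [hmem_s] at hx ⊢
    refine ⟨hmem x hx.1, ?_⟩
    intro h
    apply hx.2
    have : σ x = σ 0 := by simpa using h
    exact σ.toEquiv.injective this
  have hf1 : ∀ x ∈ s, σ x ≠ x := by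
    intro x hx h
    rw [hmem_s] at hx
    apply hx.2
    have : σ (σ x) = x := by rw [h, h]
    rw [hσ] at this
    exact htwo x (neg_eq_iff_add_eq_zero.mp this)
  have hf2 : ∀ x ∈ s, σ (σ x) ≠ x := by
    intro x hx h
    rw [hmem_s] at hx
    apply hx.2
    rw [hσ] at h
    exact htwo x (neg_eq_iff_add_eq_zero.mp h)
  have hdvd : 4 ∣ s.card := snak_aux (⇑σ) h4 s.card s rfl hcl hf1 hf2
  -- Nat.card H = s.card + 1
  have hzero : (0 : G) ∈ (H : Set G).toFinset := by
    rw [Set.mem_toFinset]; exact H.zero_mem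
  have hcard : (H : Set G).toFinset.card = s.card + 1 := by
    rw [hs, Finset.card_erase_of_mem hzero]
    have : 0 < (H : Set G).toFinset.card := Finset.card_pos.mpr ⟨0, hzero⟩
    omega
  have hNat : Nat.card H = (H : Set G).toFinset.card := by
    rw [Set.toFinset_card]
    exact Nat.card_eq_fintype_card
  obtain ⟨k, hk⟩ := hdvd
  rw [hNat, hcard, hk]
  omega
end

section
/- Let p be a prime with p ≡ 3 (mod 4) and let G be a finite abelian p-group admitting a group automorphism σ : G → G with σ(σ(x)) = −x for all x ∈ G. Then the order of G is an even power of p; in particular |G| is a perfect square. -/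
/-- If `p ≡ 3 (mod 4)` is prime and `G` is a finite abelian
`p`-group admitting an automorphism `σ` with `σ (σ x) = -x`, then `|G|` is an
even power of `p`; in particular `|G|` is a perfect square. -/
theorem snak_p_group_even_power {p : ℕ} (hp : p.Prime) (hp4 : p % 4 = 3)
    {G : Type*} [AddCommGroup G] [Fintype G] (hpG : ∃ n : ℕ, Fintype.card G = p ^ n)
    (σ : AddAut G) (hσ : ∀ x : G, σ (σ x) = -x) :
    (∃ k : ℕ, Fintype.card G = p ^ (2 * k)) ∧ IsSquare (Fintype.card G) := by
  classical
  obtain ⟨n, hn⟩ := hpG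
  -- p is odd
  have hpodd : Odd p := by
    rcases Nat.even_or_odd p with h | h
    · exfalso; obtain ⟨k, hk⟩ := h; omega
    · exact h
  have hcardodd : Odd (Fintype.card G) := hn ▸ hpodd.pow
  -- doubling is injective: x + x = 0 → x = 0
  have h2 : ∀ x : G, x + x = 0 → x = 0 := by
    intro x hx
    have h1 : addOrderOf x ∣ 2 := addOrderOf_dvd_of_nsmul_eq_zero (by simpa [two_nsmul] using hx)
    have h2' : addOrderOf x ∣ Fintype.card G := addOrderOf_dvd_card
    have hodd : Odd (addOrderOf x) := hcardodd.of_dvd_nat h2'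
    have h1' : addOrderOf x = 1 := by
      have hle := Nat.le_of_dvd two_pos h1
      interval_cases h : addOrderOf x
      · exact absurd h (addOrderOf_pos x).ne'
      · rfl
      · rcases hodd with ⟨m, hm⟩; omega
    exact AddMonoid.addOrderOf_eq_one_iff.mp h1'
  -- σ has no nonzero fixed points, and σ x ≠ -x for x ≠ 0
  have hσne : ∀ x : G, x ≠ 0 → σ x ≠ x := by
    intro x hx h
    have h1 := hσ x
    rw [h, h] at h1
    exact hx (h2 x (eq_neg_iff_add_eq_zero.mp h1))
  have hσneg : ∀ x : G, x ≠ 0 → σ x ≠ -x := by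
    intro x hx h
    have h1 := hσ x
    rw [h, map_neg, neg_inj] at h1
    exact hσne x hx h1
  have hσzero : ∀ x : G, σ x = 0 → x = 0 := by
    intro x hx
    exact σ.injective (by rw [hx, map_zero])
  -- the orbit of x under {1, σ, -1, -σ}
  set O : G → Finset G := fun x => {x, σ x, -x, -(σ x)} with hO
  have hmem : ∀ x : G, x ∈ O x := by intro x; simp [hO]
  have hOσ : ∀ x : G, O (σ x) = O x := by
    intro x; ext a; simp only [hO, Finset.mem_insert, Finset.mem_singleton, hσ x, neg_neg]; tauto
  have hOneg : ∀ x : G, O (-x) = O x := by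
    intro x; ext a
    simp only [hO, Finset.mem_insert, Finset.mem_singleton, map_neg, neg_neg]; tauto
  have hOeq : ∀ x z : G, z ∈ O x → O z = O x := by
    intro x z hz
    rcases (by simpa [hO] using hz : z = x ∨ z = σ x ∨ z = -x ∨ z = -(σ x)) with rfl | rfl | rfl | rfl
    · rfl
    · exact hOσ x
    · exact hOneg x
    · rw [hOneg, hOσ]
  have hOne : ∀ x : G, x ≠ 0 → ∀ z ∈ O x, z ≠ 0 := by
    intro x hx z hz
    rcases (by simpa [hO] using hz : z = x ∨ z = σ x ∨ z = -x ∨ z = -(σ x)) with rfl | rfl | rfl | rfl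
    · exact hx
    · exact fun h => hx (hσzero x h)
    · simpa using hx
    · simpa using fun h => hx (hσzero x h)
  have hOcard : ∀ x : G, x ≠ 0 → (O x).card = 4 := by
    intro x hx
    have d1 : x ≠ σ x := fun h => hσne x hx h.symm
    have d2 : x ≠ -x := fun h => hx (h2 x (eq_neg_iff_add_eq_zero.mp h))
    have d3 : x ≠ -(σ x) := by
      intro h
      exact hσneg x hx (by rw [← neg_eq_iff_eq_neg.mpr h])
    have d4 : σ x ≠ -x := hσneg x hx
    have d5 : σ x ≠ -(σ x) := by
      intro h
      exact hx (hσzero x (h2 (σ x) (eq_neg_iff_add_eq_zero.mp h)))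
    have d6 : (-x : G) ≠ -(σ x) := fun h => d1 (neg_inj.mp h)
    simp only [hO]
    rw [Finset.card_insert_of_notMem (by simp [d1, d2, d3]),
        Finset.card_insert_of_notMem (by simp [d4, d5]),
        Finset.card_insert_of_notMem (by simp [d6]),
        Finset.card_singleton]
  -- partition the nonzero elements into orbits
  set s : Finset G := Finset.univ.erase 0 with hs
  set T : Finset (Finset G) := s.image O with hT
  have hsmem : ∀ x : G, x ∈ s ↔ x ≠ 0 := by
    intro x; simp [hs]
  have hsT : s = T.biUnion id := by
    ext a
    simp only [Finset.mem_biUnion, id, hT, Finset.mem_image, hsmem]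
    constructor
    · intro ha
      exact ⟨O a, ⟨a, ha, rfl⟩, hmem a⟩
    · rintro ⟨t, ⟨x, hx, rfl⟩, hat⟩
      exact hOne x hx a hat
  have hdisj : ∀ t1 ∈ T, ∀ t2 ∈ T, t1 ≠ t2 → Disjoint t1 t2 := by
    rintro t1 h1 t2 h2' hne
    obtain ⟨x, hx, rfl⟩ := Finset.mem_image.mp h1
    obtain ⟨y, hy, rfl⟩ := Finset.mem_image.mp h2'
    rw [Finset.disjoint_left]
    intro z hzx hzy
    exact hne ((hOeq x z hzx).symm.trans (hOeq y z hzy))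
  have hsum : s.card = ∑ t ∈ T, t.card := by
    rw [hsT]; exact Finset.card_biUnion hdisj
  have hcards : s.card = 4 * T.card := by
    rw [hsum, Finset.sum_congr rfl (fun t ht => ?_), Finset.sum_const, smul_eq_mul, mul_comm]
    obtain ⟨x, hx, rfl⟩ := Finset.mem_image.mp ht
    exact hOcard x ((hsmem x).mp hx)
  have hscard : s.card = Fintype.card G - 1 := by
    rw [hs, Finset.card_erase_of_mem (Finset.mem_univ 0), Finset.card_univ]
  have hpos : 1 ≤ Fintype.card G := Fintype.card_pos
  have hmod : Fintype.card G % 4 = 1 := by omega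
  -- number theory: p ≡ 3 (mod 4) and p^n ≡ 1 (mod 4) force n even
  have hneven : Even n := by
    by_contra hodd
    obtain ⟨k, rfl⟩ := Nat.not_even_iff_odd.mp hodd
    have : p ^ (2 * k + 1) % 4 = 3 := by
      have hsq : p ^ 2 % 4 = 1 := by rw [Nat.pow_mod, hp4]
      rw [pow_succ, pow_mul, Nat.mul_mod, Nat.pow_mod, hsq, one_pow, hp4]
      norm_num
    omega
  obtain ⟨k, hk⟩ := hneven
  refine ⟨⟨k, by rw [hn, hk, two_mul]⟩, ⟨p ^ k, by rw [hn, hk, pow_add]⟩⟩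
end

section
/- Let G be a finite abelian group of odd order admitting a group automorphism σ : G → G with σ(σ(x)) = −x for all x ∈ G. Then the order of G is a sum of two squares: there exist integers a, b with |G| = a² + b². -/
section Aux

/-- The determinant trick: if `f ∘ f = -id` on a finite-dimensional vector space over
`ZMod p` with `p % 4 = 3`, the dimension is even. -/
lemma even_finrank_of_sq_eq_neg_one {p : ℕ} [Fact p.Prime] (hp3 : p % 4 = 3)
    (V : Type*) [AddCommGroup V] [Module (ZMod p) V] [FiniteDimensional (ZMod p) V]
    (f : V →ₗ[ZMod p] V) (hf : ∀ x, f (f x) = -x) :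
    Even (Module.finrank (ZMod p) V) := by
  by_contra hodd
  rw [Nat.not_even_iff_odd] at hodd
  have hcomp : f ∘ₗ f = (-1 : ZMod p) • LinearMap.id := by
    ext x; simp [hf x]
  have hdet : LinearMap.det f * LinearMap.det f = -1 := by
    have := congrArg LinearMap.det hcomp
    rw [LinearMap.det_comp, LinearMap.det_smul, LinearMap.det_id, mul_one,
      hodd.neg_one_pow] at this
    exact this
  have : IsSquare (-1 : ZMod p) := ⟨LinearMap.det f, hdet.symm⟩
  rw [ZMod.exists_sq_eq_neg_one_iff] at this
  exact this hp3

universe u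

/-- Key lemma: the `p`-adic valuation of the order is even for `p % 4 = 3`. -/
lemma key_even_padic (p : ℕ) (hp : Fact p.Prime) (hp3 : p % 4 = 3) :
    ∀ (n : ℕ) (G : Type u) [AddCommGroup G] [Fintype G], Fintype.card G = n →
      ∀ (σ : G ≃+ G), (∀ x : G, σ (σ x) = -x) →
        Even (padicValNat p (Fintype.card G)) := by
  intro n
  induction n using Nat.strong_induction_on with
  | _ n ih =>
    intro G _ _ hn σ hσ
    by_cases hdvd : p ∣ Fintype.card G
    · -- the p-torsion subgroup
      set V : AddSubgroup G :=
        { carrier := {x : G | p • x = 0}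
          zero_mem' := smul_zero p
          add_mem' := fun {a b} ha hb => by
            simp only [Set.mem_setOf_eq] at *
            rw [smul_add, ha, hb, add_zero]
          neg_mem' := fun {a} ha => by
            simp only [Set.mem_setOf_eq] at *
            rw [smul_neg, ha, neg_zero] } with hVdef
      have hVmem : ∀ x : G, x ∈ V ↔ p • x = 0 := fun x => Iff.rfl
      have hσV : ∀ x : G, x ∈ V → σ x ∈ V := by
        intro x hx
        rw [hVmem] at *
        rw [← map_nsmul, hx, map_zero]
      have hσV' : ∀ x : G, x ∈ V → σ.symm x ∈ V := by
        intro x hx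
        rw [hVmem] at *
        rw [← map_nsmul, hx, map_zero]
      have hVsmul : ∀ x : V, p • x = 0 := by
        intro x
        exact Subtype.ext x.2
      haveI instV : Module (ZMod p) V := AddCommGroup.zmodModule hVsmul
      haveI : FiniteDimensional (ZMod p) V := Module.Finite.of_finite
      -- the restriction of σ to V as a linear map
      let f₀ : V →+ V :=
        { toFun := fun x => ⟨σ x, hσV x x.2⟩
          map_zero' := by ext; simp
          map_add' := fun a b => by ext; simp }
      have hf : ∀ x : V, (f₀.toZModLinearMap p) ((f₀.toZModLinearMap p) x) = -x := by
        intro x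
        rw [AddMonoidHom.coe_toZModLinearMap]
        exact Subtype.ext (hσ x)
      have heven_rank : Even (Module.finrank (ZMod p) V) :=
        even_finrank_of_sq_eq_neg_one hp3 V (f₀.toZModLinearMap p) hf
      haveI : Fintype V := Fintype.ofFinite V
      have hcardV : Fintype.card V = p ^ Module.finrank (ZMod p) V := by
        rw [Module.card_eq_pow_finrank (K := ZMod p) (V := V), ZMod.card]
      -- V is nontrivial by Cauchy
      obtain ⟨x, hx⟩ := exists_prime_addOrderOf_dvd_card p hdvd
      have hxne : x ≠ 0 := by
        intro h
        rw [h, addOrderOf_zero] at hx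
        exact hp.out.one_lt.ne' hx.symm
      have hxV : x ∈ V := by
        rw [hVmem, ← hx]
        exact addOrderOf_nsmul_eq_zero x
      have hVnontriv : Nontrivial V :=
        ⟨⟨⟨x, hxV⟩, 0, fun h => hxne (congrArg Subtype.val h)⟩⟩
      have hcardVgt : 1 < Nat.card V := Finite.one_lt_card
      -- the quotient
      haveI : Finite (G ⧸ V) := Quotient.finite _
      haveI : Fintype (G ⧸ V) := Fintype.ofFinite _
      have hmap : V.map (σ : G →+ G) = V := by
        ext y
        constructor
        · rintro ⟨z, hz, rfl⟩
          exact hσV z hz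
        · intro hy
          exact ⟨σ.symm y, hσV' y hy, σ.apply_symm_apply y⟩
      let σ' : (G ⧸ V) ≃+ (G ⧸ V) := QuotientAddGroup.congr V V σ hmap
      have hσ' : ∀ q : G ⧸ V, σ' (σ' q) = -q := by
        intro q
        induction q using QuotientAddGroup.induction_on with
        | _ z =>
          have h1 : σ' (QuotientAddGroup.mk z) = QuotientAddGroup.mk (σ z) := rfl
          have h2 : σ' (QuotientAddGroup.mk (σ z)) = QuotientAddGroup.mk (σ (σ z)) := rfl
          rw [h1, h2, hσ z]
          rfl
      have hcards : Nat.card G = Nat.card (G ⧸ V) * Nat.card V :=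
        AddSubgroup.card_eq_card_quotient_mul_card_addSubgroup V
      have hposQ : 0 < Nat.card (G ⧸ V) := Nat.card_pos
      have hQlt : Fintype.card (G ⧸ V) < n := by
        rw [← Nat.card_eq_fintype_card, ← hn, ← Nat.card_eq_fintype_card, hcards]
        exact (lt_mul_iff_one_lt_right hposQ).mpr hcardVgt
      have hih : Even (padicValNat p (Fintype.card (G ⧸ V))) :=
        ih _ hQlt (G ⧸ V) rfl σ' hσ'
      -- combine
      have hQne : Fintype.card (G ⧸ V) ≠ 0 := Fintype.card_ne_zero
      have hVne : Fintype.card V ≠ 0 := Fintype.card_ne_zero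
      have hcards' : Fintype.card G = Fintype.card (G ⧸ V) * Fintype.card V := by
        rw [← Nat.card_eq_fintype_card, ← Nat.card_eq_fintype_card (α := G ⧸ V),
          ← Nat.card_eq_fintype_card (α := V)]
        exact hcards
      rw [hcards', padicValNat.mul hQne hVne]
      refine hih.add ?_
      rw [hcardV, padicValNat.prime_pow]
      exact heven_rank
    · rw [padicValNat.eq_zero_of_not_dvd hdvd]
      exact Even.zero

end Aux

/-- If `G` is a finite abelian group of odd order admitting an
automorphism `σ` with `σ (σ x) = -x`, then `|G|` is a sum of two squares. -/
theorem snak_card_sum_two_squares {G : Type*} [AddCommGroup G] [Fintype G]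
    (hodd : Odd (Fintype.card G)) (σ : AddAut G) (hσ : ∀ x : G, σ (σ x) = -x) :
    ∃ a b : ℤ, (Fintype.card G : ℤ) = a ^ 2 + b ^ 2 := by
  have h : ∃ x y : ℕ, Fintype.card G = x ^ 2 + y ^ 2 := by
    rw [Nat.eq_sq_add_sq_iff]
    intro q hq hq3
    haveI : Fact q.Prime := ⟨Nat.prime_of_mem_primeFactors hq⟩
    exact key_even_padic q ⟨Nat.prime_of_mem_primeFactors hq⟩ hq3 (Fintype.card G) G rfl σ hσ
  obtain ⟨x, y, hxy⟩ := h
  exact ⟨x, y, by exact_mod_cast hxy⟩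
end

section
/- Let G be a finite abelian group of odd order, let σ : G → G be a group automorphism with σ(σ(x)) = −x for all x ∈ G, and let H be a subgroup of G with σ(H) = H and |H|² = |G|. Then there exist integers a, b with |H| = a² + b²; consequently |G| = (a² + b²)² is the square of a sum of two squares. -/
private def myZModModule (p : ℕ) {V : Type*} [AddCommGroup V] (hV : ∀ x : V, p • x = 0) :
    Module (ZMod p) V := AddCommGroup.zmodModule hV

/-- A finite `p`-torsion abelian group (`p ≡ 3 mod 4`) with an endomorphism squaring to `-1`
has cardinality an even power of `p`. -/
private lemma vs_card_sq (p : ℕ) [hp : Fact p.Prime] (hp3 : p % 4 = 3) {V : Type*}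
    [AddCommGroup V] [Finite V] (hV : ∀ x : V, p • x = 0) (τ : V →+ V)
    (hτ : ∀ x, τ (τ x) = -x) :
    ∃ d : ℕ, Nat.card V = p ^ (2 * d) := by
  cases nonempty_fintype V
  letI : Module (ZMod p) V := myZModModule p hV
  let L := τ.toZModLinearMap p
  have hL : L ∘ₗ L = (-1 : ZMod p) • (LinearMap.id : V →ₗ[ZMod p] V) := by
    ext x
    rw [LinearMap.comp_apply, LinearMap.smul_apply, LinearMap.id_apply, neg_one_smul]
    simpa [L] using hτ x
  have hdet : LinearMap.det L ^ 2 = (-1 : ZMod p) ^ Module.finrank (ZMod p) V := by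
    rw [sq, ← LinearMap.det_comp, hL, LinearMap.det_smul, LinearMap.det_id, mul_one]
  have heven : Even (Module.finrank (ZMod p) V) := by
    by_contra h
    rw [(Nat.not_even_iff_odd.mp h).neg_one_pow] at hdet
    have hsq : IsSquare (-1 : ZMod p) := ⟨LinearMap.det L, by rw [← hdet, sq]⟩
    rw [ZMod.exists_sq_eq_neg_one_iff] at hsq
    exact hsq hp3
  obtain ⟨d, hd⟩ := heven
  refine ⟨d, ?_⟩
  rw [Nat.card_eq_fintype_card, Module.card_eq_pow_finrank (K := ZMod p), ZMod.card, hd, two_mul]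

/-- In a finite abelian group with an automorphism squaring to `-1`, every prime `p ≡ 3 mod 4`
divides the order with even multiplicity. -/
private lemma key_lemma {p : ℕ} (hp : p.Prime) (hp3 : p % 4 = 3) :
    ∀ n : ℕ, ∀ (A : Type u) [AddCommGroup A] [Finite A], Nat.card A = n →
      ∀ τ : A →+ A, Function.Bijective τ → (∀ x, τ (τ x) = -x) →
      Even (padicValNat p (Nat.card A)) := by
  haveI : Fact p.Prime := ⟨hp⟩
  intro n
  induction n using Nat.strong_induction_on with
  | _ n ih =>
    intro A _ _ hcn τ hbij hτ
    by_cases hdvd : p ∣ Nat.card A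
    · -- `f` is multiplication by `p`
      let f : A →+ A :=
        { toFun := fun x => p • x
          map_zero' := smul_zero p
          map_add' := fun a b => smul_add p a b }
      set B := f.range with hB
      set K := f.ker with hK
      -- card decomposition
      have hcards : Nat.card A = Nat.card B * Nat.card K := by
        rw [AddSubgroup.card_eq_card_quotient_mul_card_addSubgroup K]
        congr 1
        exact Nat.card_congr (QuotientAddGroup.quotientKerEquivRange f).toEquiv
      -- K is nontrivial (Cauchy)
      haveI := Fintype.ofFinite A
      obtain ⟨x, hx⟩ := exists_prime_addOrderOf_dvd_card (G := A) p
        (by rwa [← Nat.card_eq_fintype_card])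
      have hxK : x ∈ K := by
        show f x = 0
        show p • x = 0
        rw [← hx]; exact addOrderOf_nsmul_eq_zero x
      have hxne : x ≠ 0 := by
        intro h; rw [h, addOrderOf_zero] at hx; exact hp.one_lt.ne hx
      have hKtriv : 1 < Nat.card K := by
        rw [Finite.one_lt_card_iff_nontrivial]
        exact ⟨⟨⟨x, hxK⟩, 0, by simp [Subtype.ext_iff, hxne]⟩⟩
      have hBpos : 0 < Nat.card B := Nat.card_pos
      have hKpos : 0 < Nat.card K := Nat.card_pos
      have hBlt : Nat.card B < n := by
        rw [← hcn, hcards]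
        exact (Nat.lt_mul_iff_one_lt_right hBpos).mpr hKtriv
      -- τ restricts to B
      have hmapB : ∀ y : A, y ∈ B → τ y ∈ B := by
        rintro y ⟨z, rfl⟩
        refine ⟨τ z, ?_⟩
        show p • τ z = τ (p • z)
        exact (map_nsmul τ p z).symm
      let τB : B →+ B := AddMonoidHom.codRestrict ((τ.comp B.subtype)) B
        (fun y => hmapB y.1 y.2)
      have hτBval : ∀ y : B, (τB y : A) = τ (y : A) := fun y => rfl
      have hbijB : Function.Bijective τB := by
        constructor
        · intro a b hab
          exact Subtype.ext (hbij.1 (congrArg Subtype.val hab))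
        · rintro ⟨y, z, rfl⟩
          obtain ⟨w, hw⟩ := hbij.2 z
          refine ⟨⟨p • w, ⟨w, rfl⟩⟩, Subtype.ext ?_⟩
          show τ (p • w) = f z
          show τ (p • w) = p • z
          rw [map_nsmul τ p w, hw]
      have hτB : ∀ y : B, τB (τB y) = -y := by
        intro y
        apply Subtype.ext
        rw [hτBval, hτBval, hτ]
        rfl
      have hevenB : Even (padicValNat p (Nat.card B)) :=
        ih (Nat.card B) hBlt B rfl τB hbijB hτB
      -- τ restricts to K, which is p-torsion
      have hmapK : ∀ y : A, y ∈ K → τ y ∈ K := by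
        intro y hy
        have hy' : p • y = 0 := hy
        show p • τ y = 0
        rw [← map_nsmul τ p y, hy', map_zero]
      let τK : K →+ K := AddMonoidHom.codRestrict ((τ.comp K.subtype)) K
        (fun y => hmapK y.1 y.2)
      have hτK : ∀ y : K, τK (τK y) = -y := by
        intro y
        apply Subtype.ext
        show τ (τ (y : A)) = ((-y : K) : A)
        rw [hτ]
        rfl
      have hVK : ∀ y : K, p • y = 0 := by
        intro y
        apply Subtype.ext
        show p • (y : A) = 0
        exact y.2
      obtain ⟨d, hd⟩ := vs_card_sq p hp3 hVK τK hτK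
      have hevenK : Even (padicValNat p (Nat.card K)) := by
        rw [hd, padicValNat.prime_pow]
        exact even_two_mul d
      rw [hcards, padicValNat.mul hBpos.ne' hKpos.ne']
      exact hevenB.add hevenK
    · rw [padicValNat.eq_zero_of_not_dvd hdvd]
      exact Even.zero



/-- If `G` is a finite abelian group of odd order, `σ` an
automorphism with `σ (σ x) = -x`, and `H ≤ G` a `σ`-invariant subgroup with
`|H|² = |G|`, then `|H| = a² + b²` for some integers `a, b`, and consequently
`|G| = (a² + b²)²` is the square of a sum of two squares. -/
theorem snak_eq_slice_det_square_of_sum_two_squares {G : Type*} [AddCommGroup G] [Fintype G]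
    (hodd : Odd (Fintype.card G)) (σ : AddAut G) (hσ : ∀ x : G, σ (σ x) = -x)
    (H : AddSubgroup G) (hH : ⇑σ '' (H : Set G) = (H : Set G))
    (hcard : Nat.card H ^ 2 = Fintype.card G) :
    ∃ a b : ℤ, (Nat.card H : ℤ) = a ^ 2 + b ^ 2 ∧
      (Fintype.card G : ℤ) = (a ^ 2 + b ^ 2) ^ 2 := by
  -- σ restricts to an automorphism of H
  have hmem : ∀ x : G, x ∈ H → σ x ∈ H := by
    intro x hx
    have : σ x ∈ ⇑σ '' (H : Set G) := Set.mem_image_of_mem σ hx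
    rwa [hH] at this
  let τ : H →+ H := AddMonoidHom.codRestrict ((AddMonoidHom.mk' (fun x : G => σ x) (map_add σ)).comp H.subtype) H
    (fun y => hmem y.1 y.2)
  have hτval : ∀ y : H, (τ y : G) = σ (y : G) := fun y => rfl
  have hbij : Function.Bijective τ := by
    constructor
    · intro a b hab
      exact Subtype.ext (σ.injective (congrArg Subtype.val hab))
    · intro y
      have : (y : G) ∈ ⇑σ '' (H : Set G) := by rw [hH]; exact y.2
      obtain ⟨x, hx, hxy⟩ := this
      exact ⟨⟨x, hx⟩, Subtype.ext hxy⟩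
  have hτ : ∀ y : H, τ (τ y) = -y := by
    intro y
    apply Subtype.ext
    rw [hτval, hτval, hσ]
    rfl
  have hsum : ∃ x y : ℕ, Nat.card H = x ^ 2 + y ^ 2 := by
    rw [Nat.eq_sq_add_sq_iff]
    intro q hq hq3
    exact key_lemma (Nat.prime_of_mem_primeFactors hq) hq3 (Nat.card H) H rfl τ hbij hτ
  obtain ⟨x, y, hxy⟩ := hsum
  refine ⟨(x : ℤ), (y : ℤ), ?_, ?_⟩
  · exact_mod_cast congrArg (Nat.cast : ℕ → ℤ) hxy
  · rw [← hcard, hxy]; push_cast; ring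
end

section
/- Let Q₊ be the 6×6 integer matrix with rows (3,−1,0,0,−1,−1), (−1,3,−1,0,0,0), (0,−1,4,−2,0,0), (0,0,−2,4,−1,0), (−1,0,0,−1,3,0), (−1,0,0,0,0,2). Let A₁ and A₂ be the 6×6 integer matrices whose transposes A₁ᵀ and A₂ᵀ have rows (−1,1,1,0,0,0), (0,−1,0,1,1,0), (1,0,1,0,−1,−1), (−1,−1,0,−1,0,1), (0,0,−1,1,−1,0), (1,0,0,0,0,1) and (−1,1,1,0,0,0), (0,−1,0,1,1,0), (−1,0,−1,−1,0,1), (1,1,0,0,1,−1), (0,0,−1,1,−1,0), (1,0,0,0,0,1), respectively. Then A₁ᵀA₁ = Q₊ and A₂ᵀA₂ = Q₊, and for every A ∈ M₆(ℤ) with AᵀA = Q₊ there exists U ∈ M₆(ℤ) with UᵀU = I₆ such that A = U·A₁ or A = U·A₂. -/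
open Matrix

set_option maxHeartbeats 4000000
set_option maxRecDepth 100000

/-- The Goeritz matrix `Q₊` of the positive definite checkerboard surface of
the alternating strongly negative amphichiral diagram of `12a_{1105}`. -/
def Qplus : Matrix (Fin 6) (Fin 6) ℤ :=
  !![3, -1, 0, 0, -1, -1;
     -1, 3, -1, 0, 0, 0;
     0, -1, 4, -2, 0, 0;
     0, 0, -2, 4, -1, 0;
     -1, 0, 0, -1, 3, 0;
     -1, 0, 0, 0, 0, 2]

/-- The first lattice embedding `A₁`, given by specifying its transpose. -/
def A1 : Matrix (Fin 6) (Fin 6) ℤ :=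
  (!![-1, 1, 1, 0, 0, 0;
      0, -1, 0, 1, 1, 0;
      1, 0, 1, 0, -1, -1;
      -1, -1, 0, -1, 0, 1;
      0, 0, -1, 1, -1, 0;
      1, 0, 0, 0, 0, 1])ᵀ

/-- The second lattice embedding `A₂`, given by specifying its transpose. -/
def A2 : Matrix (Fin 6) (Fin 6) ℤ :=
  (!![-1, 1, 1, 0, 0, 0;
      0, -1, 0, 1, 1, 0;
      -1, 0, -1, -1, 0, 1;
      1, 1, 0, 0, 1, -1;
      0, 0, -1, 1, -1, 0;
      1, 0, 0, 0, 0, 1])ᵀ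

/-- Explicit dot product of integer vectors of length 6. -/
def dotv (u v : Fin 6 → ℤ) : ℤ :=
  u 0 * v 0 + u 1 * v 1 + u 2 * v 2 + u 3 * v 3 + u 4 * v 4 + u 5 * v 5

/-- Column `j` of a matrix, as a vector. -/
def colv (A : Matrix (Fin 6) (Fin 6) ℤ) (j : Fin 6) : Fin 6 → ℤ := fun i => A i j

def mk (a b c d e f : ℤ) : Fin 6 → ℤ := ![a, b, c, d, e, f]

def mkM (r0 r1 r2 r3 r4 r5 : Fin 6 → ℤ) : Matrix (Fin 6) (Fin 6) ℤ :=
  Matrix.of ![r0, r1, r2, r3, r4, r5]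

def r5 : List ℤ := [-2, -1, 0, 1, 2]

def L2 : List (Fin 6 → ℤ) :=
  [mk (-1) (-1) 0 0 0 0,
  mk (-1) 0 (-1) 0 0 0,
  mk (-1) 0 0 (-1) 0 0,
  mk (-1) 0 0 0 (-1) 0,
  mk (-1) 0 0 0 0 (-1),
  mk (-1) 0 0 0 0 1,
  mk (-1) 0 0 0 1 0,
  mk (-1) 0 0 1 0 0,
  mk (-1) 0 1 0 0 0,
  mk (-1) 1 0 0 0 0,
  mk 0 (-1) (-1) 0 0 0,
  mk 0 (-1) 0 (-1) 0 0,
  mk 0 (-1) 0 0 (-1) 0,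
  mk 0 (-1) 0 0 0 (-1),
  mk 0 (-1) 0 0 0 1,
  mk 0 (-1) 0 0 1 0,
  mk 0 (-1) 0 1 0 0,
  mk 0 (-1) 1 0 0 0,
  mk 0 0 (-1) (-1) 0 0,
  mk 0 0 (-1) 0 (-1) 0,
  mk 0 0 (-1) 0 0 (-1),
  mk 0 0 (-1) 0 0 1,
  mk 0 0 (-1) 0 1 0,
  mk 0 0 (-1) 1 0 0,
  mk 0 0 0 (-1) (-1) 0,
  mk 0 0 0 (-1) 0 (-1),
  mk 0 0 0 (-1) 0 1,
  mk 0 0 0 (-1) 1 0,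
  mk 0 0 0 0 (-1) (-1),
  mk 0 0 0 0 (-1) 1,
  mk 0 0 0 0 1 (-1),
  mk 0 0 0 0 1 1,
  mk 0 0 0 1 (-1) 0,
  mk 0 0 0 1 0 (-1),
  mk 0 0 0 1 0 1,
  mk 0 0 0 1 1 0,
  mk 0 0 1 (-1) 0 0,
  mk 0 0 1 0 (-1) 0,
  mk 0 0 1 0 0 (-1),
  mk 0 0 1 0 0 1,
  mk 0 0 1 0 1 0,
  mk 0 0 1 1 0 0,
  mk 0 1 (-1) 0 0 0,
  mk 0 1 0 (-1) 0 0,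
  mk 0 1 0 0 (-1) 0,
  mk 0 1 0 0 0 (-1),
  mk 0 1 0 0 0 1,
  mk 0 1 0 0 1 0,
  mk 0 1 0 1 0 0,
  mk 0 1 1 0 0 0,
  mk 1 (-1) 0 0 0 0,
  mk 1 0 (-1) 0 0 0,
  mk 1 0 0 (-1) 0 0,
  mk 1 0 0 0 (-1) 0,
  mk 1 0 0 0 0 (-1),
  mk 1 0 0 0 0 1,
  mk 1 0 0 0 1 0,
  mk 1 0 0 1 0 0,
  mk 1 0 1 0 0 0,
  mk 1 1 0 0 0 0]

def L3 : List (Fin 6 → ℤ) :=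
  [mk (-1) (-1) (-1) 0 0 0,
  mk (-1) (-1) 0 (-1) 0 0,
  mk (-1) (-1) 0 0 (-1) 0,
  mk (-1) (-1) 0 0 0 (-1),
  mk (-1) (-1) 0 0 0 1,
  mk (-1) (-1) 0 0 1 0,
  mk (-1) (-1) 0 1 0 0,
  mk (-1) (-1) 1 0 0 0,
  mk (-1) 0 (-1) (-1) 0 0,
  mk (-1) 0 (-1) 0 (-1) 0,
  mk (-1) 0 (-1) 0 0 (-1),
  mk (-1) 0 (-1) 0 0 1,
  mk (-1) 0 (-1) 0 1 0,
  mk (-1) 0 (-1) 1 0 0,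
  mk (-1) 0 0 (-1) (-1) 0,
  mk (-1) 0 0 (-1) 0 (-1),
  mk (-1) 0 0 (-1) 0 1,
  mk (-1) 0 0 (-1) 1 0,
  mk (-1) 0 0 0 (-1) (-1),
  mk (-1) 0 0 0 (-1) 1,
  mk (-1) 0 0 0 1 (-1),
  mk (-1) 0 0 0 1 1,
  mk (-1) 0 0 1 (-1) 0,
  mk (-1) 0 0 1 0 (-1),
  mk (-1) 0 0 1 0 1,
  mk (-1) 0 0 1 1 0,
  mk (-1) 0 1 (-1) 0 0,
  mk (-1) 0 1 0 (-1) 0,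
  mk (-1) 0 1 0 0 (-1),
  mk (-1) 0 1 0 0 1,
  mk (-1) 0 1 0 1 0,
  mk (-1) 0 1 1 0 0,
  mk (-1) 1 (-1) 0 0 0,
  mk (-1) 1 0 (-1) 0 0,
  mk (-1) 1 0 0 (-1) 0,
  mk (-1) 1 0 0 0 (-1),
  mk (-1) 1 0 0 0 1,
  mk (-1) 1 0 0 1 0,
  mk (-1) 1 0 1 0 0,
  mk (-1) 1 1 0 0 0,
  mk 0 (-1) (-1) (-1) 0 0,
  mk 0 (-1) (-1) 0 (-1) 0,
  mk 0 (-1) (-1) 0 0 (-1),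
  mk 0 (-1) (-1) 0 0 1,
  mk 0 (-1) (-1) 0 1 0,
  mk 0 (-1) (-1) 1 0 0,
  mk 0 (-1) 0 (-1) (-1) 0,
  mk 0 (-1) 0 (-1) 0 (-1),
  mk 0 (-1) 0 (-1) 0 1,
  mk 0 (-1) 0 (-1) 1 0,
  mk 0 (-1) 0 0 (-1) (-1),
  mk 0 (-1) 0 0 (-1) 1,
  mk 0 (-1) 0 0 1 (-1),
  mk 0 (-1) 0 0 1 1,
  mk 0 (-1) 0 1 (-1) 0,
  mk 0 (-1) 0 1 0 (-1),
  mk 0 (-1) 0 1 0 1,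
  mk 0 (-1) 0 1 1 0,
  mk 0 (-1) 1 (-1) 0 0,
  mk 0 (-1) 1 0 (-1) 0,
  mk 0 (-1) 1 0 0 (-1),
  mk 0 (-1) 1 0 0 1,
  mk 0 (-1) 1 0 1 0,
  mk 0 (-1) 1 1 0 0,
  mk 0 0 (-1) (-1) (-1) 0,
  mk 0 0 (-1) (-1) 0 (-1),
  mk 0 0 (-1) (-1) 0 1,
  mk 0 0 (-1) (-1) 1 0,
  mk 0 0 (-1) 0 (-1) (-1),
  mk 0 0 (-1) 0 (-1) 1,
  mk 0 0 (-1) 0 1 (-1),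
  mk 0 0 (-1) 0 1 1,
  mk 0 0 (-1) 1 (-1) 0,
  mk 0 0 (-1) 1 0 (-1),
  mk 0 0 (-1) 1 0 1,
  mk 0 0 (-1) 1 1 0,
  mk 0 0 0 (-1) (-1) (-1),
  mk 0 0 0 (-1) (-1) 1,
  mk 0 0 0 (-1) 1 (-1),
  mk 0 0 0 (-1) 1 1,
  mk 0 0 0 1 (-1) (-1),
  mk 0 0 0 1 (-1) 1,
  mk 0 0 0 1 1 (-1),
  mk 0 0 0 1 1 1,
  mk 0 0 1 (-1) (-1) 0,
  mk 0 0 1 (-1) 0 (-1),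
  mk 0 0 1 (-1) 0 1,
  mk 0 0 1 (-1) 1 0,
  mk 0 0 1 0 (-1) (-1),
  mk 0 0 1 0 (-1) 1,
  mk 0 0 1 0 1 (-1),
  mk 0 0 1 0 1 1,
  mk 0 0 1 1 (-1) 0,
  mk 0 0 1 1 0 (-1),
  mk 0 0 1 1 0 1,
  mk 0 0 1 1 1 0,
  mk 0 1 (-1) (-1) 0 0,
  mk 0 1 (-1) 0 (-1) 0,
  mk 0 1 (-1) 0 0 (-1),
  mk 0 1 (-1) 0 0 1,
  mk 0 1 (-1) 0 1 0,
  mk 0 1 (-1) 1 0 0,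
  mk 0 1 0 (-1) (-1) 0,
  mk 0 1 0 (-1) 0 (-1),
  mk 0 1 0 (-1) 0 1,
  mk 0 1 0 (-1) 1 0,
  mk 0 1 0 0 (-1) (-1),
  mk 0 1 0 0 (-1) 1,
  mk 0 1 0 0 1 (-1),
  mk 0 1 0 0 1 1,
  mk 0 1 0 1 (-1) 0,
  mk 0 1 0 1 0 (-1),
  mk 0 1 0 1 0 1,
  mk 0 1 0 1 1 0,
  mk 0 1 1 (-1) 0 0,
  mk 0 1 1 0 (-1) 0,
  mk 0 1 1 0 0 (-1),
  mk 0 1 1 0 0 1,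
  mk 0 1 1 0 1 0,
  mk 0 1 1 1 0 0,
  mk 1 (-1) (-1) 0 0 0,
  mk 1 (-1) 0 (-1) 0 0,
  mk 1 (-1) 0 0 (-1) 0,
  mk 1 (-1) 0 0 0 (-1),
  mk 1 (-1) 0 0 0 1,
  mk 1 (-1) 0 0 1 0,
  mk 1 (-1) 0 1 0 0,
  mk 1 (-1) 1 0 0 0,
  mk 1 0 (-1) (-1) 0 0,
  mk 1 0 (-1) 0 (-1) 0,
  mk 1 0 (-1) 0 0 (-1),
  mk 1 0 (-1) 0 0 1,
  mk 1 0 (-1) 0 1 0,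
  mk 1 0 (-1) 1 0 0,
  mk 1 0 0 (-1) (-1) 0,
  mk 1 0 0 (-1) 0 (-1),
  mk 1 0 0 (-1) 0 1,
  mk 1 0 0 (-1) 1 0,
  mk 1 0 0 0 (-1) (-1),
  mk 1 0 0 0 (-1) 1,
  mk 1 0 0 0 1 (-1),
  mk 1 0 0 0 1 1,
  mk 1 0 0 1 (-1) 0,
  mk 1 0 0 1 0 (-1),
  mk 1 0 0 1 0 1,
  mk 1 0 0 1 1 0,
  mk 1 0 1 (-1) 0 0,
  mk 1 0 1 0 (-1) 0,
  mk 1 0 1 0 0 (-1),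
  mk 1 0 1 0 0 1,
  mk 1 0 1 0 1 0,
  mk 1 0 1 1 0 0,
  mk 1 1 (-1) 0 0 0,
  mk 1 1 0 (-1) 0 0,
  mk 1 1 0 0 (-1) 0,
  mk 1 1 0 0 0 (-1),
  mk 1 1 0 0 0 1,
  mk 1 1 0 0 1 0,
  mk 1 1 0 1 0 0,
  mk 1 1 1 0 0 0]

def L4 : List (Fin 6 → ℤ) :=
  [mk (-2) 0 0 0 0 0,
  mk (-1) (-1) (-1) (-1) 0 0,
  mk (-1) (-1) (-1) 0 (-1) 0,
  mk (-1) (-1) (-1) 0 0 (-1),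
  mk (-1) (-1) (-1) 0 0 1,
  mk (-1) (-1) (-1) 0 1 0,
  mk (-1) (-1) (-1) 1 0 0,
  mk (-1) (-1) 0 (-1) (-1) 0,
  mk (-1) (-1) 0 (-1) 0 (-1),
  mk (-1) (-1) 0 (-1) 0 1,
  mk (-1) (-1) 0 (-1) 1 0,
  mk (-1) (-1) 0 0 (-1) (-1),
  mk (-1) (-1) 0 0 (-1) 1,
  mk (-1) (-1) 0 0 1 (-1),
  mk (-1) (-1) 0 0 1 1,
  mk (-1) (-1) 0 1 (-1) 0,
  mk (-1) (-1) 0 1 0 (-1),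
  mk (-1) (-1) 0 1 0 1,
  mk (-1) (-1) 0 1 1 0,
  mk (-1) (-1) 1 (-1) 0 0,
  mk (-1) (-1) 1 0 (-1) 0,
  mk (-1) (-1) 1 0 0 (-1),
  mk (-1) (-1) 1 0 0 1,
  mk (-1) (-1) 1 0 1 0,
  mk (-1) (-1) 1 1 0 0,
  mk (-1) 0 (-1) (-1) (-1) 0,
  mk (-1) 0 (-1) (-1) 0 (-1),
  mk (-1) 0 (-1) (-1) 0 1,
  mk (-1) 0 (-1) (-1) 1 0,
  mk (-1) 0 (-1) 0 (-1) (-1),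
  mk (-1) 0 (-1) 0 (-1) 1,
  mk (-1) 0 (-1) 0 1 (-1),
  mk (-1) 0 (-1) 0 1 1,
  mk (-1) 0 (-1) 1 (-1) 0,
  mk (-1) 0 (-1) 1 0 (-1),
  mk (-1) 0 (-1) 1 0 1,
  mk (-1) 0 (-1) 1 1 0,
  mk (-1) 0 0 (-1) (-1) (-1),
  mk (-1) 0 0 (-1) (-1) 1,
  mk (-1) 0 0 (-1) 1 (-1),
  mk (-1) 0 0 (-1) 1 1,
  mk (-1) 0 0 1 (-1) (-1),
  mk (-1) 0 0 1 (-1) 1,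
  mk (-1) 0 0 1 1 (-1),
  mk (-1) 0 0 1 1 1,
  mk (-1) 0 1 (-1) (-1) 0,
  mk (-1) 0 1 (-1) 0 (-1),
  mk (-1) 0 1 (-1) 0 1,
  mk (-1) 0 1 (-1) 1 0,
  mk (-1) 0 1 0 (-1) (-1),
  mk (-1) 0 1 0 (-1) 1,
  mk (-1) 0 1 0 1 (-1),
  mk (-1) 0 1 0 1 1,
  mk (-1) 0 1 1 (-1) 0,
  mk (-1) 0 1 1 0 (-1),
  mk (-1) 0 1 1 0 1,
  mk (-1) 0 1 1 1 0,
  mk (-1) 1 (-1) (-1) 0 0,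
  mk (-1) 1 (-1) 0 (-1) 0,
  mk (-1) 1 (-1) 0 0 (-1),
  mk (-1) 1 (-1) 0 0 1,
  mk (-1) 1 (-1) 0 1 0,
  mk (-1) 1 (-1) 1 0 0,
  mk (-1) 1 0 (-1) (-1) 0,
  mk (-1) 1 0 (-1) 0 (-1),
  mk (-1) 1 0 (-1) 0 1,
  mk (-1) 1 0 (-1) 1 0,
  mk (-1) 1 0 0 (-1) (-1),
  mk (-1) 1 0 0 (-1) 1,
  mk (-1) 1 0 0 1 (-1),
  mk (-1) 1 0 0 1 1,
  mk (-1) 1 0 1 (-1) 0,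
  mk (-1) 1 0 1 0 (-1),
  mk (-1) 1 0 1 0 1,
  mk (-1) 1 0 1 1 0,
  mk (-1) 1 1 (-1) 0 0,
  mk (-1) 1 1 0 (-1) 0,
  mk (-1) 1 1 0 0 (-1),
  mk (-1) 1 1 0 0 1,
  mk (-1) 1 1 0 1 0,
  mk (-1) 1 1 1 0 0,
  mk 0 (-2) 0 0 0 0,
  mk 0 (-1) (-1) (-1) (-1) 0,
  mk 0 (-1) (-1) (-1) 0 (-1),
  mk 0 (-1) (-1) (-1) 0 1,
  mk 0 (-1) (-1) (-1) 1 0,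
  mk 0 (-1) (-1) 0 (-1) (-1),
  mk 0 (-1) (-1) 0 (-1) 1,
  mk 0 (-1) (-1) 0 1 (-1),
  mk 0 (-1) (-1) 0 1 1,
  mk 0 (-1) (-1) 1 (-1) 0,
  mk 0 (-1) (-1) 1 0 (-1),
  mk 0 (-1) (-1) 1 0 1,
  mk 0 (-1) (-1) 1 1 0,
  mk 0 (-1) 0 (-1) (-1) (-1),
  mk 0 (-1) 0 (-1) (-1) 1,
  mk 0 (-1) 0 (-1) 1 (-1),
  mk 0 (-1) 0 (-1) 1 1,
  mk 0 (-1) 0 1 (-1) (-1),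
  mk 0 (-1) 0 1 (-1) 1,
  mk 0 (-1) 0 1 1 (-1),
  mk 0 (-1) 0 1 1 1,
  mk 0 (-1) 1 (-1) (-1) 0,
  mk 0 (-1) 1 (-1) 0 (-1),
  mk 0 (-1) 1 (-1) 0 1,
  mk 0 (-1) 1 (-1) 1 0,
  mk 0 (-1) 1 0 (-1) (-1),
  mk 0 (-1) 1 0 (-1) 1,
  mk 0 (-1) 1 0 1 (-1),
  mk 0 (-1) 1 0 1 1,
  mk 0 (-1) 1 1 (-1) 0,
  mk 0 (-1) 1 1 0 (-1),
  mk 0 (-1) 1 1 0 1,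
  mk 0 (-1) 1 1 1 0,
  mk 0 0 (-2) 0 0 0,
  mk 0 0 (-1) (-1) (-1) (-1),
  mk 0 0 (-1) (-1) (-1) 1,
  mk 0 0 (-1) (-1) 1 (-1),
  mk 0 0 (-1) (-1) 1 1,
  mk 0 0 (-1) 1 (-1) (-1),
  mk 0 0 (-1) 1 (-1) 1,
  mk 0 0 (-1) 1 1 (-1),
  mk 0 0 (-1) 1 1 1,
  mk 0 0 0 (-2) 0 0,
  mk 0 0 0 0 (-2) 0,
  mk 0 0 0 0 0 (-2),
  mk 0 0 0 0 0 2,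
  mk 0 0 0 0 2 0,
  mk 0 0 0 2 0 0,
  mk 0 0 1 (-1) (-1) (-1),
  mk 0 0 1 (-1) (-1) 1,
  mk 0 0 1 (-1) 1 (-1),
  mk 0 0 1 (-1) 1 1,
  mk 0 0 1 1 (-1) (-1),
  mk 0 0 1 1 (-1) 1,
  mk 0 0 1 1 1 (-1),
  mk 0 0 1 1 1 1,
  mk 0 0 2 0 0 0,
  mk 0 1 (-1) (-1) (-1) 0,
  mk 0 1 (-1) (-1) 0 (-1),
  mk 0 1 (-1) (-1) 0 1,
  mk 0 1 (-1) (-1) 1 0,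
  mk 0 1 (-1) 0 (-1) (-1),
  mk 0 1 (-1) 0 (-1) 1,
  mk 0 1 (-1) 0 1 (-1),
  mk 0 1 (-1) 0 1 1,
  mk 0 1 (-1) 1 (-1) 0,
  mk 0 1 (-1) 1 0 (-1),
  mk 0 1 (-1) 1 0 1,
  mk 0 1 (-1) 1 1 0,
  mk 0 1 0 (-1) (-1) (-1),
  mk 0 1 0 (-1) (-1) 1,
  mk 0 1 0 (-1) 1 (-1),
  mk 0 1 0 (-1) 1 1,
  mk 0 1 0 1 (-1) (-1),
  mk 0 1 0 1 (-1) 1,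
  mk 0 1 0 1 1 (-1),
  mk 0 1 0 1 1 1,
  mk 0 1 1 (-1) (-1) 0,
  mk 0 1 1 (-1) 0 (-1),
  mk 0 1 1 (-1) 0 1,
  mk 0 1 1 (-1) 1 0,
  mk 0 1 1 0 (-1) (-1),
  mk 0 1 1 0 (-1) 1,
  mk 0 1 1 0 1 (-1),
  mk 0 1 1 0 1 1,
  mk 0 1 1 1 (-1) 0,
  mk 0 1 1 1 0 (-1),
  mk 0 1 1 1 0 1,
  mk 0 1 1 1 1 0,
  mk 0 2 0 0 0 0,
  mk 1 (-1) (-1) (-1) 0 0,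
  mk 1 (-1) (-1) 0 (-1) 0,
  mk 1 (-1) (-1) 0 0 (-1),
  mk 1 (-1) (-1) 0 0 1,
  mk 1 (-1) (-1) 0 1 0,
  mk 1 (-1) (-1) 1 0 0,
  mk 1 (-1) 0 (-1) (-1) 0,
  mk 1 (-1) 0 (-1) 0 (-1),
  mk 1 (-1) 0 (-1) 0 1,
  mk 1 (-1) 0 (-1) 1 0,
  mk 1 (-1) 0 0 (-1) (-1),
  mk 1 (-1) 0 0 (-1) 1,
  mk 1 (-1) 0 0 1 (-1),
  mk 1 (-1) 0 0 1 1,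
  mk 1 (-1) 0 1 (-1) 0,
  mk 1 (-1) 0 1 0 (-1),
  mk 1 (-1) 0 1 0 1,
  mk 1 (-1) 0 1 1 0,
  mk 1 (-1) 1 (-1) 0 0,
  mk 1 (-1) 1 0 (-1) 0,
  mk 1 (-1) 1 0 0 (-1),
  mk 1 (-1) 1 0 0 1,
  mk 1 (-1) 1 0 1 0,
  mk 1 (-1) 1 1 0 0,
  mk 1 0 (-1) (-1) (-1) 0,
  mk 1 0 (-1) (-1) 0 (-1),
  mk 1 0 (-1) (-1) 0 1,
  mk 1 0 (-1) (-1) 1 0,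
  mk 1 0 (-1) 0 (-1) (-1),
  mk 1 0 (-1) 0 (-1) 1,
  mk 1 0 (-1) 0 1 (-1),
  mk 1 0 (-1) 0 1 1,
  mk 1 0 (-1) 1 (-1) 0,
  mk 1 0 (-1) 1 0 (-1),
  mk 1 0 (-1) 1 0 1,
  mk 1 0 (-1) 1 1 0,
  mk 1 0 0 (-1) (-1) (-1),
  mk 1 0 0 (-1) (-1) 1,
  mk 1 0 0 (-1) 1 (-1),
  mk 1 0 0 (-1) 1 1,
  mk 1 0 0 1 (-1) (-1),
  mk 1 0 0 1 (-1) 1,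
  mk 1 0 0 1 1 (-1),
  mk 1 0 0 1 1 1,
  mk 1 0 1 (-1) (-1) 0,
  mk 1 0 1 (-1) 0 (-1),
  mk 1 0 1 (-1) 0 1,
  mk 1 0 1 (-1) 1 0,
  mk 1 0 1 0 (-1) (-1),
  mk 1 0 1 0 (-1) 1,
  mk 1 0 1 0 1 (-1),
  mk 1 0 1 0 1 1,
  mk 1 0 1 1 (-1) 0,
  mk 1 0 1 1 0 (-1),
  mk 1 0 1 1 0 1,
  mk 1 0 1 1 1 0,
  mk 1 1 (-1) (-1) 0 0,
  mk 1 1 (-1) 0 (-1) 0,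
  mk 1 1 (-1) 0 0 (-1),
  mk 1 1 (-1) 0 0 1,
  mk 1 1 (-1) 0 1 0,
  mk 1 1 (-1) 1 0 0,
  mk 1 1 0 (-1) (-1) 0,
  mk 1 1 0 (-1) 0 (-1),
  mk 1 1 0 (-1) 0 1,
  mk 1 1 0 (-1) 1 0,
  mk 1 1 0 0 (-1) (-1),
  mk 1 1 0 0 (-1) 1,
  mk 1 1 0 0 1 (-1),
  mk 1 1 0 0 1 1,
  mk 1 1 0 1 (-1) 0,
  mk 1 1 0 1 0 (-1),
  mk 1 1 0 1 0 1,
  mk 1 1 0 1 1 0,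
  mk 1 1 1 (-1) 0 0,
  mk 1 1 1 0 (-1) 0,
  mk 1 1 1 0 0 (-1),
  mk 1 1 1 0 0 1,
  mk 1 1 1 0 1 0,
  mk 1 1 1 1 0 0,
  mk 2 0 0 0 0 0]

def L3a : List (Fin 6 → ℤ) :=
  [mk 0 0 (-1) 0 (-1) (-1),
  mk 0 0 (-1) 0 (-1) 1,
  mk 0 0 (-1) 0 1 (-1),
  mk 0 0 (-1) 0 1 1,
  mk 0 0 0 (-1) (-1) (-1),
  mk 0 0 0 (-1) (-1) 1,
  mk 0 0 0 (-1) 1 (-1),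
  mk 0 0 0 (-1) 1 1,
  mk 1 (-1) 0 0 (-1) 0,
  mk 1 (-1) 0 0 0 (-1),
  mk 1 (-1) 0 0 0 1,
  mk 1 (-1) 0 0 1 0]

def L4b : List (Fin 6 → ℤ) :=
  [mk (-1) 1 (-1) 0 (-1) 0,
  mk (-1) 1 (-1) 0 0 (-1),
  mk (-1) 1 (-1) 0 0 1,
  mk (-1) 1 (-1) 0 1 0,
  mk (-1) 1 0 (-1) (-1) 0,
  mk (-1) 1 0 (-1) 0 (-1),
  mk (-1) 1 0 (-1) 0 1,
  mk (-1) 1 0 (-1) 1 0,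
  mk 0 0 (-1) 1 (-1) (-1),
  mk 0 0 (-1) 1 (-1) 1,
  mk 0 0 (-1) 1 1 (-1),
  mk 0 0 (-1) 1 1 1,
  mk 0 0 0 0 (-2) 0,
  mk 0 0 0 0 0 (-2),
  mk 0 0 0 0 0 2,
  mk 0 0 0 0 2 0,
  mk 0 0 1 (-1) (-1) (-1),
  mk 0 0 1 (-1) (-1) 1,
  mk 0 0 1 (-1) 1 (-1),
  mk 0 0 1 (-1) 1 1,
  mk 1 (-1) 0 1 (-1) 0,
  mk 1 (-1) 0 1 0 (-1),
  mk 1 (-1) 0 1 0 1,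
  mk 1 (-1) 0 1 1 0,
  mk 1 (-1) 1 0 (-1) 0,
  mk 1 (-1) 1 0 0 (-1),
  mk 1 (-1) 1 0 0 1,
  mk 1 (-1) 1 0 1 0]

def c1 : Fin 6 → ℤ := mk (-1) 0 1 1 0 0
def c6 : Fin 6 → ℤ := mk 1 1 0 0 0 0

def T1 : List ((Fin 6 → ℤ) × Matrix (Fin 6) (Fin 6) ℤ) :=
  [(mk (-1) (-1) 0 0 0 0, mkM (mk (-1) 0 0 0 0 0) (mk 0 (-1) 0 0 0 0) (mk 0 0 1 0 0 0) (mk 0 0 0 1 0 0) (mk 0 0 0 0 1 0) (mk 0 0 0 0 0 1)),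
  (mk (-1) 0 (-1) 0 0 0, mkM (mk (-1) 0 0 0 0 0) (mk 0 0 (-1) 0 0 0) (mk 0 1 0 0 0 0) (mk 0 0 0 1 0 0) (mk 0 0 0 0 1 0) (mk 0 0 0 0 0 1)),
  (mk (-1) 0 0 (-1) 0 0, mkM (mk (-1) 0 0 0 0 0) (mk 0 0 0 (-1) 0 0) (mk 0 1 0 0 0 0) (mk 0 0 1 0 0 0) (mk 0 0 0 0 1 0) (mk 0 0 0 0 0 1)),
  (mk (-1) 0 0 0 (-1) 0, mkM (mk (-1) 0 0 0 0 0) (mk 0 0 0 0 (-1) 0) (mk 0 1 0 0 0 0) (mk 0 0 1 0 0 0) (mk 0 0 0 1 0 0) (mk 0 0 0 0 0 1)),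
  (mk (-1) 0 0 0 0 (-1), mkM (mk (-1) 0 0 0 0 0) (mk 0 0 0 0 0 (-1)) (mk 0 1 0 0 0 0) (mk 0 0 1 0 0 0) (mk 0 0 0 1 0 0) (mk 0 0 0 0 1 0)),
  (mk (-1) 0 0 0 0 1, mkM (mk (-1) 0 0 0 0 0) (mk 0 0 0 0 0 1) (mk 0 1 0 0 0 0) (mk 0 0 1 0 0 0) (mk 0 0 0 1 0 0) (mk 0 0 0 0 1 0)),
  (mk (-1) 0 0 0 1 0, mkM (mk (-1) 0 0 0 0 0) (mk 0 0 0 0 1 0) (mk 0 1 0 0 0 0) (mk 0 0 1 0 0 0) (mk 0 0 0 1 0 0) (mk 0 0 0 0 0 1)),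
  (mk (-1) 0 0 1 0 0, mkM (mk (-1) 0 0 0 0 0) (mk 0 0 0 1 0 0) (mk 0 1 0 0 0 0) (mk 0 0 1 0 0 0) (mk 0 0 0 0 1 0) (mk 0 0 0 0 0 1)),
  (mk (-1) 0 1 0 0 0, mkM (mk (-1) 0 0 0 0 0) (mk 0 0 1 0 0 0) (mk 0 1 0 0 0 0) (mk 0 0 0 1 0 0) (mk 0 0 0 0 1 0) (mk 0 0 0 0 0 1)),
  (mk (-1) 1 0 0 0 0, mkM (mk (-1) 0 0 0 0 0) (mk 0 1 0 0 0 0) (mk 0 0 1 0 0 0) (mk 0 0 0 1 0 0) (mk 0 0 0 0 1 0) (mk 0 0 0 0 0 1)),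
  (mk 0 (-1) (-1) 0 0 0, mkM (mk 0 (-1) 0 0 0 0) (mk 0 0 (-1) 0 0 0) (mk 1 0 0 0 0 0) (mk 0 0 0 1 0 0) (mk 0 0 0 0 1 0) (mk 0 0 0 0 0 1)),
  (mk 0 (-1) 0 (-1) 0 0, mkM (mk 0 (-1) 0 0 0 0) (mk 0 0 0 (-1) 0 0) (mk 1 0 0 0 0 0) (mk 0 0 1 0 0 0) (mk 0 0 0 0 1 0) (mk 0 0 0 0 0 1)),
  (mk 0 (-1) 0 0 (-1) 0, mkM (mk 0 (-1) 0 0 0 0) (mk 0 0 0 0 (-1) 0) (mk 1 0 0 0 0 0) (mk 0 0 1 0 0 0) (mk 0 0 0 1 0 0) (mk 0 0 0 0 0 1)),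
  (mk 0 (-1) 0 0 0 (-1), mkM (mk 0 (-1) 0 0 0 0) (mk 0 0 0 0 0 (-1)) (mk 1 0 0 0 0 0) (mk 0 0 1 0 0 0) (mk 0 0 0 1 0 0) (mk 0 0 0 0 1 0)),
  (mk 0 (-1) 0 0 0 1, mkM (mk 0 (-1) 0 0 0 0) (mk 0 0 0 0 0 1) (mk 1 0 0 0 0 0) (mk 0 0 1 0 0 0) (mk 0 0 0 1 0 0) (mk 0 0 0 0 1 0)),
  (mk 0 (-1) 0 0 1 0, mkM (mk 0 (-1) 0 0 0 0) (mk 0 0 0 0 1 0) (mk 1 0 0 0 0 0) (mk 0 0 1 0 0 0) (mk 0 0 0 1 0 0) (mk 0 0 0 0 0 1)),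
  (mk 0 (-1) 0 1 0 0, mkM (mk 0 (-1) 0 0 0 0) (mk 0 0 0 1 0 0) (mk 1 0 0 0 0 0) (mk 0 0 1 0 0 0) (mk 0 0 0 0 1 0) (mk 0 0 0 0 0 1)),
  (mk 0 (-1) 1 0 0 0, mkM (mk 0 (-1) 0 0 0 0) (mk 0 0 1 0 0 0) (mk 1 0 0 0 0 0) (mk 0 0 0 1 0 0) (mk 0 0 0 0 1 0) (mk 0 0 0 0 0 1)),
  (mk 0 0 (-1) (-1) 0 0, mkM (mk 0 0 (-1) 0 0 0) (mk 0 0 0 (-1) 0 0) (mk 1 0 0 0 0 0) (mk 0 1 0 0 0 0) (mk 0 0 0 0 1 0) (mk 0 0 0 0 0 1)),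
  (mk 0 0 (-1) 0 (-1) 0, mkM (mk 0 0 (-1) 0 0 0) (mk 0 0 0 0 (-1) 0) (mk 1 0 0 0 0 0) (mk 0 1 0 0 0 0) (mk 0 0 0 1 0 0) (mk 0 0 0 0 0 1)),
  (mk 0 0 (-1) 0 0 (-1), mkM (mk 0 0 (-1) 0 0 0) (mk 0 0 0 0 0 (-1)) (mk 1 0 0 0 0 0) (mk 0 1 0 0 0 0) (mk 0 0 0 1 0 0) (mk 0 0 0 0 1 0)),
  (mk 0 0 (-1) 0 0 1, mkM (mk 0 0 (-1) 0 0 0) (mk 0 0 0 0 0 1) (mk 1 0 0 0 0 0) (mk 0 1 0 0 0 0) (mk 0 0 0 1 0 0) (mk 0 0 0 0 1 0)),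
  (mk 0 0 (-1) 0 1 0, mkM (mk 0 0 (-1) 0 0 0) (mk 0 0 0 0 1 0) (mk 1 0 0 0 0 0) (mk 0 1 0 0 0 0) (mk 0 0 0 1 0 0) (mk 0 0 0 0 0 1)),
  (mk 0 0 (-1) 1 0 0, mkM (mk 0 0 (-1) 0 0 0) (mk 0 0 0 1 0 0) (mk 1 0 0 0 0 0) (mk 0 1 0 0 0 0) (mk 0 0 0 0 1 0) (mk 0 0 0 0 0 1)),
  (mk 0 0 0 (-1) (-1) 0, mkM (mk 0 0 0 (-1) 0 0) (mk 0 0 0 0 (-1) 0) (mk 1 0 0 0 0 0) (mk 0 1 0 0 0 0) (mk 0 0 1 0 0 0) (mk 0 0 0 0 0 1)),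
  (mk 0 0 0 (-1) 0 (-1), mkM (mk 0 0 0 (-1) 0 0) (mk 0 0 0 0 0 (-1)) (mk 1 0 0 0 0 0) (mk 0 1 0 0 0 0) (mk 0 0 1 0 0 0) (mk 0 0 0 0 1 0)),
  (mk 0 0 0 (-1) 0 1, mkM (mk 0 0 0 (-1) 0 0) (mk 0 0 0 0 0 1) (mk 1 0 0 0 0 0) (mk 0 1 0 0 0 0) (mk 0 0 1 0 0 0) (mk 0 0 0 0 1 0)),
  (mk 0 0 0 (-1) 1 0, mkM (mk 0 0 0 (-1) 0 0) (mk 0 0 0 0 1 0) (mk 1 0 0 0 0 0) (mk 0 1 0 0 0 0) (mk 0 0 1 0 0 0) (mk 0 0 0 0 0 1)),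
  (mk 0 0 0 0 (-1) (-1), mkM (mk 0 0 0 0 (-1) 0) (mk 0 0 0 0 0 (-1)) (mk 1 0 0 0 0 0) (mk 0 1 0 0 0 0) (mk 0 0 1 0 0 0) (mk 0 0 0 1 0 0)),
  (mk 0 0 0 0 (-1) 1, mkM (mk 0 0 0 0 (-1) 0) (mk 0 0 0 0 0 1) (mk 1 0 0 0 0 0) (mk 0 1 0 0 0 0) (mk 0 0 1 0 0 0) (mk 0 0 0 1 0 0)),
  (mk 0 0 0 0 1 (-1), mkM (mk 0 0 0 0 1 0) (mk 0 0 0 0 0 (-1)) (mk 1 0 0 0 0 0) (mk 0 1 0 0 0 0) (mk 0 0 1 0 0 0) (mk 0 0 0 1 0 0)),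
  (mk 0 0 0 0 1 1, mkM (mk 0 0 0 0 1 0) (mk 0 0 0 0 0 1) (mk 1 0 0 0 0 0) (mk 0 1 0 0 0 0) (mk 0 0 1 0 0 0) (mk 0 0 0 1 0 0)),
  (mk 0 0 0 1 (-1) 0, mkM (mk 0 0 0 1 0 0) (mk 0 0 0 0 (-1) 0) (mk 1 0 0 0 0 0) (mk 0 1 0 0 0 0) (mk 0 0 1 0 0 0) (mk 0 0 0 0 0 1)),
  (mk 0 0 0 1 0 (-1), mkM (mk 0 0 0 1 0 0) (mk 0 0 0 0 0 (-1)) (mk 1 0 0 0 0 0) (mk 0 1 0 0 0 0) (mk 0 0 1 0 0 0) (mk 0 0 0 0 1 0)),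
  (mk 0 0 0 1 0 1, mkM (mk 0 0 0 1 0 0) (mk 0 0 0 0 0 1) (mk 1 0 0 0 0 0) (mk 0 1 0 0 0 0) (mk 0 0 1 0 0 0) (mk 0 0 0 0 1 0)),
  (mk 0 0 0 1 1 0, mkM (mk 0 0 0 1 0 0) (mk 0 0 0 0 1 0) (mk 1 0 0 0 0 0) (mk 0 1 0 0 0 0) (mk 0 0 1 0 0 0) (mk 0 0 0 0 0 1)),
  (mk 0 0 1 (-1) 0 0, mkM (mk 0 0 1 0 0 0) (mk 0 0 0 (-1) 0 0) (mk 1 0 0 0 0 0) (mk 0 1 0 0 0 0) (mk 0 0 0 0 1 0) (mk 0 0 0 0 0 1)),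
  (mk 0 0 1 0 (-1) 0, mkM (mk 0 0 1 0 0 0) (mk 0 0 0 0 (-1) 0) (mk 1 0 0 0 0 0) (mk 0 1 0 0 0 0) (mk 0 0 0 1 0 0) (mk 0 0 0 0 0 1)),
  (mk 0 0 1 0 0 (-1), mkM (mk 0 0 1 0 0 0) (mk 0 0 0 0 0 (-1)) (mk 1 0 0 0 0 0) (mk 0 1 0 0 0 0) (mk 0 0 0 1 0 0) (mk 0 0 0 0 1 0)),
  (mk 0 0 1 0 0 1, mkM (mk 0 0 1 0 0 0) (mk 0 0 0 0 0 1) (mk 1 0 0 0 0 0) (mk 0 1 0 0 0 0) (mk 0 0 0 1 0 0) (mk 0 0 0 0 1 0)),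
  (mk 0 0 1 0 1 0, mkM (mk 0 0 1 0 0 0) (mk 0 0 0 0 1 0) (mk 1 0 0 0 0 0) (mk 0 1 0 0 0 0) (mk 0 0 0 1 0 0) (mk 0 0 0 0 0 1)),
  (mk 0 0 1 1 0 0, mkM (mk 0 0 1 0 0 0) (mk 0 0 0 1 0 0) (mk 1 0 0 0 0 0) (mk 0 1 0 0 0 0) (mk 0 0 0 0 1 0) (mk 0 0 0 0 0 1)),
  (mk 0 1 (-1) 0 0 0, mkM (mk 0 1 0 0 0 0) (mk 0 0 (-1) 0 0 0) (mk 1 0 0 0 0 0) (mk 0 0 0 1 0 0) (mk 0 0 0 0 1 0) (mk 0 0 0 0 0 1)),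
  (mk 0 1 0 (-1) 0 0, mkM (mk 0 1 0 0 0 0) (mk 0 0 0 (-1) 0 0) (mk 1 0 0 0 0 0) (mk 0 0 1 0 0 0) (mk 0 0 0 0 1 0) (mk 0 0 0 0 0 1)),
  (mk 0 1 0 0 (-1) 0, mkM (mk 0 1 0 0 0 0) (mk 0 0 0 0 (-1) 0) (mk 1 0 0 0 0 0) (mk 0 0 1 0 0 0) (mk 0 0 0 1 0 0) (mk 0 0 0 0 0 1)),
  (mk 0 1 0 0 0 (-1), mkM (mk 0 1 0 0 0 0) (mk 0 0 0 0 0 (-1)) (mk 1 0 0 0 0 0) (mk 0 0 1 0 0 0) (mk 0 0 0 1 0 0) (mk 0 0 0 0 1 0)),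
  (mk 0 1 0 0 0 1, mkM (mk 0 1 0 0 0 0) (mk 0 0 0 0 0 1) (mk 1 0 0 0 0 0) (mk 0 0 1 0 0 0) (mk 0 0 0 1 0 0) (mk 0 0 0 0 1 0)),
  (mk 0 1 0 0 1 0, mkM (mk 0 1 0 0 0 0) (mk 0 0 0 0 1 0) (mk 1 0 0 0 0 0) (mk 0 0 1 0 0 0) (mk 0 0 0 1 0 0) (mk 0 0 0 0 0 1)),
  (mk 0 1 0 1 0 0, mkM (mk 0 1 0 0 0 0) (mk 0 0 0 1 0 0) (mk 1 0 0 0 0 0) (mk 0 0 1 0 0 0) (mk 0 0 0 0 1 0) (mk 0 0 0 0 0 1)),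
  (mk 0 1 1 0 0 0, mkM (mk 0 1 0 0 0 0) (mk 0 0 1 0 0 0) (mk 1 0 0 0 0 0) (mk 0 0 0 1 0 0) (mk 0 0 0 0 1 0) (mk 0 0 0 0 0 1)),
  (mk 1 (-1) 0 0 0 0, mkM (mk 1 0 0 0 0 0) (mk 0 (-1) 0 0 0 0) (mk 0 0 1 0 0 0) (mk 0 0 0 1 0 0) (mk 0 0 0 0 1 0) (mk 0 0 0 0 0 1)),
  (mk 1 0 (-1) 0 0 0, mkM (mk 1 0 0 0 0 0) (mk 0 0 (-1) 0 0 0) (mk 0 1 0 0 0 0) (mk 0 0 0 1 0 0) (mk 0 0 0 0 1 0) (mk 0 0 0 0 0 1)),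
  (mk 1 0 0 (-1) 0 0, mkM (mk 1 0 0 0 0 0) (mk 0 0 0 (-1) 0 0) (mk 0 1 0 0 0 0) (mk 0 0 1 0 0 0) (mk 0 0 0 0 1 0) (mk 0 0 0 0 0 1)),
  (mk 1 0 0 0 (-1) 0, mkM (mk 1 0 0 0 0 0) (mk 0 0 0 0 (-1) 0) (mk 0 1 0 0 0 0) (mk 0 0 1 0 0 0) (mk 0 0 0 1 0 0) (mk 0 0 0 0 0 1)),
  (mk 1 0 0 0 0 (-1), mkM (mk 1 0 0 0 0 0) (mk 0 0 0 0 0 (-1)) (mk 0 1 0 0 0 0) (mk 0 0 1 0 0 0) (mk 0 0 0 1 0 0) (mk 0 0 0 0 1 0)),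
  (mk 1 0 0 0 0 1, mkM (mk 1 0 0 0 0 0) (mk 0 0 0 0 0 1) (mk 0 1 0 0 0 0) (mk 0 0 1 0 0 0) (mk 0 0 0 1 0 0) (mk 0 0 0 0 1 0)),
  (mk 1 0 0 0 1 0, mkM (mk 1 0 0 0 0 0) (mk 0 0 0 0 1 0) (mk 0 1 0 0 0 0) (mk 0 0 1 0 0 0) (mk 0 0 0 1 0 0) (mk 0 0 0 0 0 1)),
  (mk 1 0 0 1 0 0, mkM (mk 1 0 0 0 0 0) (mk 0 0 0 1 0 0) (mk 0 1 0 0 0 0) (mk 0 0 1 0 0 0) (mk 0 0 0 0 1 0) (mk 0 0 0 0 0 1)),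
  (mk 1 0 1 0 0 0, mkM (mk 1 0 0 0 0 0) (mk 0 0 1 0 0 0) (mk 0 1 0 0 0 0) (mk 0 0 0 1 0 0) (mk 0 0 0 0 1 0) (mk 0 0 0 0 0 1)),
  (mk 1 1 0 0 0 0, mkM (mk 1 0 0 0 0 0) (mk 0 1 0 0 0 0) (mk 0 0 1 0 0 0) (mk 0 0 0 1 0 0) (mk 0 0 0 0 1 0) (mk 0 0 0 0 0 1))]

def T2 : List ((Fin 6 → ℤ) × Matrix (Fin 6) (Fin 6) ℤ) :=
  [(mk (-1) 0 (-1) (-1) 0 0, mkM (mk 1 0 0 0 0 0) (mk 0 1 0 0 0 0) (mk 0 0 (-1) 0 0 0) (mk 0 0 0 (-1) 0 0) (mk 0 0 0 0 1 0) (mk 0 0 0 0 0 1)),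
  (mk (-1) 0 (-1) 0 (-1) 0, mkM (mk 1 0 0 0 0 0) (mk 0 1 0 0 0 0) (mk 0 0 (-1) 0 0 0) (mk 0 0 0 0 (-1) 0) (mk 0 0 0 1 0 0) (mk 0 0 0 0 0 1)),
  (mk (-1) 0 (-1) 0 0 (-1), mkM (mk 1 0 0 0 0 0) (mk 0 1 0 0 0 0) (mk 0 0 (-1) 0 0 0) (mk 0 0 0 0 0 (-1)) (mk 0 0 0 1 0 0) (mk 0 0 0 0 1 0)),
  (mk (-1) 0 (-1) 0 0 1, mkM (mk 1 0 0 0 0 0) (mk 0 1 0 0 0 0) (mk 0 0 (-1) 0 0 0) (mk 0 0 0 0 0 1) (mk 0 0 0 1 0 0) (mk 0 0 0 0 1 0)),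
  (mk (-1) 0 (-1) 0 1 0, mkM (mk 1 0 0 0 0 0) (mk 0 1 0 0 0 0) (mk 0 0 (-1) 0 0 0) (mk 0 0 0 0 1 0) (mk 0 0 0 1 0 0) (mk 0 0 0 0 0 1)),
  (mk (-1) 0 (-1) 1 0 0, mkM (mk 1 0 0 0 0 0) (mk 0 1 0 0 0 0) (mk 0 0 (-1) 0 0 0) (mk 0 0 0 1 0 0) (mk 0 0 0 0 1 0) (mk 0 0 0 0 0 1)),
  (mk (-1) 0 0 (-1) (-1) 0, mkM (mk 1 0 0 0 0 0) (mk 0 1 0 0 0 0) (mk 0 0 0 (-1) 0 0) (mk 0 0 0 0 (-1) 0) (mk 0 0 1 0 0 0) (mk 0 0 0 0 0 1)),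
  (mk (-1) 0 0 (-1) 0 (-1), mkM (mk 1 0 0 0 0 0) (mk 0 1 0 0 0 0) (mk 0 0 0 (-1) 0 0) (mk 0 0 0 0 0 (-1)) (mk 0 0 1 0 0 0) (mk 0 0 0 0 1 0)),
  (mk (-1) 0 0 (-1) 0 1, mkM (mk 1 0 0 0 0 0) (mk 0 1 0 0 0 0) (mk 0 0 0 (-1) 0 0) (mk 0 0 0 0 0 1) (mk 0 0 1 0 0 0) (mk 0 0 0 0 1 0)),
  (mk (-1) 0 0 (-1) 1 0, mkM (mk 1 0 0 0 0 0) (mk 0 1 0 0 0 0) (mk 0 0 0 (-1) 0 0) (mk 0 0 0 0 1 0) (mk 0 0 1 0 0 0) (mk 0 0 0 0 0 1)),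
  (mk (-1) 0 0 0 (-1) (-1), mkM (mk 1 0 0 0 0 0) (mk 0 1 0 0 0 0) (mk 0 0 0 0 (-1) 0) (mk 0 0 0 0 0 (-1)) (mk 0 0 1 0 0 0) (mk 0 0 0 1 0 0)),
  (mk (-1) 0 0 0 (-1) 1, mkM (mk 1 0 0 0 0 0) (mk 0 1 0 0 0 0) (mk 0 0 0 0 (-1) 0) (mk 0 0 0 0 0 1) (mk 0 0 1 0 0 0) (mk 0 0 0 1 0 0)),
  (mk (-1) 0 0 0 1 (-1), mkM (mk 1 0 0 0 0 0) (mk 0 1 0 0 0 0) (mk 0 0 0 0 1 0) (mk 0 0 0 0 0 (-1)) (mk 0 0 1 0 0 0) (mk 0 0 0 1 0 0)),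
  (mk (-1) 0 0 0 1 1, mkM (mk 1 0 0 0 0 0) (mk 0 1 0 0 0 0) (mk 0 0 0 0 1 0) (mk 0 0 0 0 0 1) (mk 0 0 1 0 0 0) (mk 0 0 0 1 0 0)),
  (mk (-1) 0 0 1 (-1) 0, mkM (mk 1 0 0 0 0 0) (mk 0 1 0 0 0 0) (mk 0 0 0 1 0 0) (mk 0 0 0 0 (-1) 0) (mk 0 0 1 0 0 0) (mk 0 0 0 0 0 1)),
  (mk (-1) 0 0 1 0 (-1), mkM (mk 1 0 0 0 0 0) (mk 0 1 0 0 0 0) (mk 0 0 0 1 0 0) (mk 0 0 0 0 0 (-1)) (mk 0 0 1 0 0 0) (mk 0 0 0 0 1 0)),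
  (mk (-1) 0 0 1 0 1, mkM (mk 1 0 0 0 0 0) (mk 0 1 0 0 0 0) (mk 0 0 0 1 0 0) (mk 0 0 0 0 0 1) (mk 0 0 1 0 0 0) (mk 0 0 0 0 1 0)),
  (mk (-1) 0 0 1 1 0, mkM (mk 1 0 0 0 0 0) (mk 0 1 0 0 0 0) (mk 0 0 0 1 0 0) (mk 0 0 0 0 1 0) (mk 0 0 1 0 0 0) (mk 0 0 0 0 0 1)),
  (mk (-1) 0 1 (-1) 0 0, mkM (mk 1 0 0 0 0 0) (mk 0 1 0 0 0 0) (mk 0 0 1 0 0 0) (mk 0 0 0 (-1) 0 0) (mk 0 0 0 0 1 0) (mk 0 0 0 0 0 1)),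
  (mk (-1) 0 1 0 (-1) 0, mkM (mk 1 0 0 0 0 0) (mk 0 1 0 0 0 0) (mk 0 0 1 0 0 0) (mk 0 0 0 0 (-1) 0) (mk 0 0 0 1 0 0) (mk 0 0 0 0 0 1)),
  (mk (-1) 0 1 0 0 (-1), mkM (mk 1 0 0 0 0 0) (mk 0 1 0 0 0 0) (mk 0 0 1 0 0 0) (mk 0 0 0 0 0 (-1)) (mk 0 0 0 1 0 0) (mk 0 0 0 0 1 0)),
  (mk (-1) 0 1 0 0 1, mkM (mk 1 0 0 0 0 0) (mk 0 1 0 0 0 0) (mk 0 0 1 0 0 0) (mk 0 0 0 0 0 1) (mk 0 0 0 1 0 0) (mk 0 0 0 0 1 0)),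
  (mk (-1) 0 1 0 1 0, mkM (mk 1 0 0 0 0 0) (mk 0 1 0 0 0 0) (mk 0 0 1 0 0 0) (mk 0 0 0 0 1 0) (mk 0 0 0 1 0 0) (mk 0 0 0 0 0 1)),
  (mk (-1) 0 1 1 0 0, mkM (mk 1 0 0 0 0 0) (mk 0 1 0 0 0 0) (mk 0 0 1 0 0 0) (mk 0 0 0 1 0 0) (mk 0 0 0 0 1 0) (mk 0 0 0 0 0 1)),
  (mk 0 (-1) (-1) (-1) 0 0, mkM (mk 0 1 0 0 0 0) (mk 1 0 0 0 0 0) (mk 0 0 (-1) 0 0 0) (mk 0 0 0 (-1) 0 0) (mk 0 0 0 0 1 0) (mk 0 0 0 0 0 1)),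
  (mk 0 (-1) (-1) 0 (-1) 0, mkM (mk 0 1 0 0 0 0) (mk 1 0 0 0 0 0) (mk 0 0 (-1) 0 0 0) (mk 0 0 0 0 (-1) 0) (mk 0 0 0 1 0 0) (mk 0 0 0 0 0 1)),
  (mk 0 (-1) (-1) 0 0 (-1), mkM (mk 0 1 0 0 0 0) (mk 1 0 0 0 0 0) (mk 0 0 (-1) 0 0 0) (mk 0 0 0 0 0 (-1)) (mk 0 0 0 1 0 0) (mk 0 0 0 0 1 0)),
  (mk 0 (-1) (-1) 0 0 1, mkM (mk 0 1 0 0 0 0) (mk 1 0 0 0 0 0) (mk 0 0 (-1) 0 0 0) (mk 0 0 0 0 0 1) (mk 0 0 0 1 0 0) (mk 0 0 0 0 1 0)),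
  (mk 0 (-1) (-1) 0 1 0, mkM (mk 0 1 0 0 0 0) (mk 1 0 0 0 0 0) (mk 0 0 (-1) 0 0 0) (mk 0 0 0 0 1 0) (mk 0 0 0 1 0 0) (mk 0 0 0 0 0 1)),
  (mk 0 (-1) (-1) 1 0 0, mkM (mk 0 1 0 0 0 0) (mk 1 0 0 0 0 0) (mk 0 0 (-1) 0 0 0) (mk 0 0 0 1 0 0) (mk 0 0 0 0 1 0) (mk 0 0 0 0 0 1)),
  (mk 0 (-1) 0 (-1) (-1) 0, mkM (mk 0 1 0 0 0 0) (mk 1 0 0 0 0 0) (mk 0 0 0 (-1) 0 0) (mk 0 0 0 0 (-1) 0) (mk 0 0 1 0 0 0) (mk 0 0 0 0 0 1)),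
  (mk 0 (-1) 0 (-1) 0 (-1), mkM (mk 0 1 0 0 0 0) (mk 1 0 0 0 0 0) (mk 0 0 0 (-1) 0 0) (mk 0 0 0 0 0 (-1)) (mk 0 0 1 0 0 0) (mk 0 0 0 0 1 0)),
  (mk 0 (-1) 0 (-1) 0 1, mkM (mk 0 1 0 0 0 0) (mk 1 0 0 0 0 0) (mk 0 0 0 (-1) 0 0) (mk 0 0 0 0 0 1) (mk 0 0 1 0 0 0) (mk 0 0 0 0 1 0)),
  (mk 0 (-1) 0 (-1) 1 0, mkM (mk 0 1 0 0 0 0) (mk 1 0 0 0 0 0) (mk 0 0 0 (-1) 0 0) (mk 0 0 0 0 1 0) (mk 0 0 1 0 0 0) (mk 0 0 0 0 0 1)),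
  (mk 0 (-1) 0 0 (-1) (-1), mkM (mk 0 1 0 0 0 0) (mk 1 0 0 0 0 0) (mk 0 0 0 0 (-1) 0) (mk 0 0 0 0 0 (-1)) (mk 0 0 1 0 0 0) (mk 0 0 0 1 0 0)),
  (mk 0 (-1) 0 0 (-1) 1, mkM (mk 0 1 0 0 0 0) (mk 1 0 0 0 0 0) (mk 0 0 0 0 (-1) 0) (mk 0 0 0 0 0 1) (mk 0 0 1 0 0 0) (mk 0 0 0 1 0 0)),
  (mk 0 (-1) 0 0 1 (-1), mkM (mk 0 1 0 0 0 0) (mk 1 0 0 0 0 0) (mk 0 0 0 0 1 0) (mk 0 0 0 0 0 (-1)) (mk 0 0 1 0 0 0) (mk 0 0 0 1 0 0)),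
  (mk 0 (-1) 0 0 1 1, mkM (mk 0 1 0 0 0 0) (mk 1 0 0 0 0 0) (mk 0 0 0 0 1 0) (mk 0 0 0 0 0 1) (mk 0 0 1 0 0 0) (mk 0 0 0 1 0 0)),
  (mk 0 (-1) 0 1 (-1) 0, mkM (mk 0 1 0 0 0 0) (mk 1 0 0 0 0 0) (mk 0 0 0 1 0 0) (mk 0 0 0 0 (-1) 0) (mk 0 0 1 0 0 0) (mk 0 0 0 0 0 1)),
  (mk 0 (-1) 0 1 0 (-1), mkM (mk 0 1 0 0 0 0) (mk 1 0 0 0 0 0) (mk 0 0 0 1 0 0) (mk 0 0 0 0 0 (-1)) (mk 0 0 1 0 0 0) (mk 0 0 0 0 1 0)),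
  (mk 0 (-1) 0 1 0 1, mkM (mk 0 1 0 0 0 0) (mk 1 0 0 0 0 0) (mk 0 0 0 1 0 0) (mk 0 0 0 0 0 1) (mk 0 0 1 0 0 0) (mk 0 0 0 0 1 0)),
  (mk 0 (-1) 0 1 1 0, mkM (mk 0 1 0 0 0 0) (mk 1 0 0 0 0 0) (mk 0 0 0 1 0 0) (mk 0 0 0 0 1 0) (mk 0 0 1 0 0 0) (mk 0 0 0 0 0 1)),
  (mk 0 (-1) 1 (-1) 0 0, mkM (mk 0 1 0 0 0 0) (mk 1 0 0 0 0 0) (mk 0 0 1 0 0 0) (mk 0 0 0 (-1) 0 0) (mk 0 0 0 0 1 0) (mk 0 0 0 0 0 1)),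
  (mk 0 (-1) 1 0 (-1) 0, mkM (mk 0 1 0 0 0 0) (mk 1 0 0 0 0 0) (mk 0 0 1 0 0 0) (mk 0 0 0 0 (-1) 0) (mk 0 0 0 1 0 0) (mk 0 0 0 0 0 1)),
  (mk 0 (-1) 1 0 0 (-1), mkM (mk 0 1 0 0 0 0) (mk 1 0 0 0 0 0) (mk 0 0 1 0 0 0) (mk 0 0 0 0 0 (-1)) (mk 0 0 0 1 0 0) (mk 0 0 0 0 1 0)),
  (mk 0 (-1) 1 0 0 1, mkM (mk 0 1 0 0 0 0) (mk 1 0 0 0 0 0) (mk 0 0 1 0 0 0) (mk 0 0 0 0 0 1) (mk 0 0 0 1 0 0) (mk 0 0 0 0 1 0)),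
  (mk 0 (-1) 1 0 1 0, mkM (mk 0 1 0 0 0 0) (mk 1 0 0 0 0 0) (mk 0 0 1 0 0 0) (mk 0 0 0 0 1 0) (mk 0 0 0 1 0 0) (mk 0 0 0 0 0 1)),
  (mk 0 (-1) 1 1 0 0, mkM (mk 0 1 0 0 0 0) (mk 1 0 0 0 0 0) (mk 0 0 1 0 0 0) (mk 0 0 0 1 0 0) (mk 0 0 0 0 1 0) (mk 0 0 0 0 0 1))]

def TS1 : List (Matrix (Fin 6) (Fin 6) ℤ × Matrix (Fin 6) (Fin 6) ℤ) :=
  [(mkM (mk (-1) 0 1 1 0 0) (mk 0 0 (-1) 0 (-1) (-1)) (mk 1 (-1) 0 1 0 1) (mk (-1) 1 (-1) 0 1 0) (mk 0 0 0 (-1) (-1) 1) (mk 1 1 0 0 0 0), mkM (mk 1 0 0 0 0 0) (mk 0 0 0 0 0 1) (mk 0 1 0 0 0 0) (mk 0 0 1 0 0 0) (mk 0 0 0 (-1) 0 0) (mk 0 0 0 0 (-1) 0)),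
  (mkM (mk (-1) 0 1 1 0 0) (mk 0 0 (-1) 0 (-1) (-1)) (mk 1 (-1) 0 1 1 0) (mk (-1) 1 (-1) 0 0 1) (mk 0 0 0 (-1) 1 (-1)) (mk 1 1 0 0 0 0), mkM (mk 1 0 0 0 0 0) (mk 0 0 0 0 0 1) (mk 0 1 0 0 0 0) (mk 0 0 1 0 0 0) (mk 0 0 0 0 (-1) 0) (mk 0 0 0 (-1) 0 0)),
  (mkM (mk (-1) 0 1 1 0 0) (mk 0 0 (-1) 0 (-1) 1) (mk 1 (-1) 0 1 0 (-1)) (mk (-1) 1 (-1) 0 1 0) (mk 0 0 0 (-1) (-1) (-1)) (mk 1 1 0 0 0 0), mkM (mk 1 0 0 0 0 0) (mk 0 0 0 0 0 1) (mk 0 1 0 0 0 0) (mk 0 0 1 0 0 0) (mk 0 0 0 (-1) 0 0) (mk 0 0 0 0 1 0)),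
  (mkM (mk (-1) 0 1 1 0 0) (mk 0 0 (-1) 0 (-1) 1) (mk 1 (-1) 0 1 1 0) (mk (-1) 1 (-1) 0 0 (-1)) (mk 0 0 0 (-1) 1 1) (mk 1 1 0 0 0 0), mkM (mk 1 0 0 0 0 0) (mk 0 0 0 0 0 1) (mk 0 1 0 0 0 0) (mk 0 0 1 0 0 0) (mk 0 0 0 0 (-1) 0) (mk 0 0 0 1 0 0)),
  (mkM (mk (-1) 0 1 1 0 0) (mk 0 0 (-1) 0 1 (-1)) (mk 1 (-1) 0 1 (-1) 0) (mk (-1) 1 (-1) 0 0 1) (mk 0 0 0 (-1) (-1) (-1)) (mk 1 1 0 0 0 0), mkM (mk 1 0 0 0 0 0) (mk 0 0 0 0 0 1) (mk 0 1 0 0 0 0) (mk 0 0 1 0 0 0) (mk 0 0 0 0 1 0) (mk 0 0 0 (-1) 0 0)),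
  (mkM (mk (-1) 0 1 1 0 0) (mk 0 0 (-1) 0 1 (-1)) (mk 1 (-1) 0 1 0 1) (mk (-1) 1 (-1) 0 (-1) 0) (mk 0 0 0 (-1) 1 1) (mk 1 1 0 0 0 0), mkM (mk 1 0 0 0 0 0) (mk 0 0 0 0 0 1) (mk 0 1 0 0 0 0) (mk 0 0 1 0 0 0) (mk 0 0 0 1 0 0) (mk 0 0 0 0 (-1) 0)),
  (mkM (mk (-1) 0 1 1 0 0) (mk 0 0 (-1) 0 1 1) (mk 1 (-1) 0 1 (-1) 0) (mk (-1) 1 (-1) 0 0 (-1)) (mk 0 0 0 (-1) (-1) 1) (mk 1 1 0 0 0 0), mkM (mk 1 0 0 0 0 0) (mk 0 0 0 0 0 1) (mk 0 1 0 0 0 0) (mk 0 0 1 0 0 0) (mk 0 0 0 0 1 0) (mk 0 0 0 1 0 0)),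
  (mkM (mk (-1) 0 1 1 0 0) (mk 0 0 (-1) 0 1 1) (mk 1 (-1) 0 1 0 (-1)) (mk (-1) 1 (-1) 0 (-1) 0) (mk 0 0 0 (-1) 1 (-1)) (mk 1 1 0 0 0 0), mkM (mk 1 0 0 0 0 0) (mk 0 0 0 0 0 1) (mk 0 1 0 0 0 0) (mk 0 0 1 0 0 0) (mk 0 0 0 1 0 0) (mk 0 0 0 0 1 0)),
  (mkM (mk (-1) 0 1 1 0 0) (mk 0 0 0 (-1) (-1) (-1)) (mk 1 (-1) 1 0 0 1) (mk (-1) 1 0 (-1) 1 0) (mk 0 0 (-1) 0 (-1) 1) (mk 1 1 0 0 0 0), mkM (mk 1 0 0 0 0 0) (mk 0 0 0 0 0 1) (mk 0 0 1 0 0 0) (mk 0 1 0 0 0 0) (mk 0 0 0 (-1) 0 0) (mk 0 0 0 0 (-1) 0)),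
  (mkM (mk (-1) 0 1 1 0 0) (mk 0 0 0 (-1) (-1) (-1)) (mk 1 (-1) 1 0 1 0) (mk (-1) 1 0 (-1) 0 1) (mk 0 0 (-1) 0 1 (-1)) (mk 1 1 0 0 0 0), mkM (mk 1 0 0 0 0 0) (mk 0 0 0 0 0 1) (mk 0 0 1 0 0 0) (mk 0 1 0 0 0 0) (mk 0 0 0 0 (-1) 0) (mk 0 0 0 (-1) 0 0)),
  (mkM (mk (-1) 0 1 1 0 0) (mk 0 0 0 (-1) (-1) 1) (mk 1 (-1) 1 0 0 (-1)) (mk (-1) 1 0 (-1) 1 0) (mk 0 0 (-1) 0 (-1) (-1)) (mk 1 1 0 0 0 0), mkM (mk 1 0 0 0 0 0) (mk 0 0 0 0 0 1) (mk 0 0 1 0 0 0) (mk 0 1 0 0 0 0) (mk 0 0 0 (-1) 0 0) (mk 0 0 0 0 1 0)),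
  (mkM (mk (-1) 0 1 1 0 0) (mk 0 0 0 (-1) (-1) 1) (mk 1 (-1) 1 0 1 0) (mk (-1) 1 0 (-1) 0 (-1)) (mk 0 0 (-1) 0 1 1) (mk 1 1 0 0 0 0), mkM (mk 1 0 0 0 0 0) (mk 0 0 0 0 0 1) (mk 0 0 1 0 0 0) (mk 0 1 0 0 0 0) (mk 0 0 0 0 (-1) 0) (mk 0 0 0 1 0 0)),
  (mkM (mk (-1) 0 1 1 0 0) (mk 0 0 0 (-1) 1 (-1)) (mk 1 (-1) 1 0 (-1) 0) (mk (-1) 1 0 (-1) 0 1) (mk 0 0 (-1) 0 (-1) (-1)) (mk 1 1 0 0 0 0), mkM (mk 1 0 0 0 0 0) (mk 0 0 0 0 0 1) (mk 0 0 1 0 0 0) (mk 0 1 0 0 0 0) (mk 0 0 0 0 1 0) (mk 0 0 0 (-1) 0 0)),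
  (mkM (mk (-1) 0 1 1 0 0) (mk 0 0 0 (-1) 1 (-1)) (mk 1 (-1) 1 0 0 1) (mk (-1) 1 0 (-1) (-1) 0) (mk 0 0 (-1) 0 1 1) (mk 1 1 0 0 0 0), mkM (mk 1 0 0 0 0 0) (mk 0 0 0 0 0 1) (mk 0 0 1 0 0 0) (mk 0 1 0 0 0 0) (mk 0 0 0 1 0 0) (mk 0 0 0 0 (-1) 0)),
  (mkM (mk (-1) 0 1 1 0 0) (mk 0 0 0 (-1) 1 1) (mk 1 (-1) 1 0 (-1) 0) (mk (-1) 1 0 (-1) 0 (-1)) (mk 0 0 (-1) 0 (-1) 1) (mk 1 1 0 0 0 0), mkM (mk 1 0 0 0 0 0) (mk 0 0 0 0 0 1) (mk 0 0 1 0 0 0) (mk 0 1 0 0 0 0) (mk 0 0 0 0 1 0) (mk 0 0 0 1 0 0)),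
  (mkM (mk (-1) 0 1 1 0 0) (mk 0 0 0 (-1) 1 1) (mk 1 (-1) 1 0 0 (-1)) (mk (-1) 1 0 (-1) (-1) 0) (mk 0 0 (-1) 0 1 (-1)) (mk 1 1 0 0 0 0), mkM (mk 1 0 0 0 0 0) (mk 0 0 0 0 0 1) (mk 0 0 1 0 0 0) (mk 0 1 0 0 0 0) (mk 0 0 0 1 0 0) (mk 0 0 0 0 1 0))]

def TS2 : List (Matrix (Fin 6) (Fin 6) ℤ × Matrix (Fin 6) (Fin 6) ℤ) :=
  [(mkM (mk (-1) 0 1 1 0 0) (mk 0 0 (-1) 0 (-1) (-1)) (mk (-1) 1 0 (-1) 0 1) (mk 1 (-1) 1 0 (-1) 0) (mk 0 0 0 (-1) 1 (-1)) (mk 1 1 0 0 0 0), mkM (mk 1 0 0 0 0 0) (mk 0 0 0 0 0 1) (mk 0 1 0 0 0 0) (mk 0 0 1 0 0 0) (mk 0 0 0 0 (-1) 0) (mk 0 0 0 (-1) 0 0)),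
  (mkM (mk (-1) 0 1 1 0 0) (mk 0 0 (-1) 0 (-1) (-1)) (mk (-1) 1 0 (-1) 1 0) (mk 1 (-1) 1 0 0 (-1)) (mk 0 0 0 (-1) (-1) 1) (mk 1 1 0 0 0 0), mkM (mk 1 0 0 0 0 0) (mk 0 0 0 0 0 1) (mk 0 1 0 0 0 0) (mk 0 0 1 0 0 0) (mk 0 0 0 (-1) 0 0) (mk 0 0 0 0 (-1) 0)),
  (mkM (mk (-1) 0 1 1 0 0) (mk 0 0 (-1) 0 (-1) 1) (mk (-1) 1 0 (-1) 0 (-1)) (mk 1 (-1) 1 0 (-1) 0) (mk 0 0 0 (-1) 1 1) (mk 1 1 0 0 0 0), mkM (mk 1 0 0 0 0 0) (mk 0 0 0 0 0 1) (mk 0 1 0 0 0 0) (mk 0 0 1 0 0 0) (mk 0 0 0 0 (-1) 0) (mk 0 0 0 1 0 0)),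
  (mkM (mk (-1) 0 1 1 0 0) (mk 0 0 (-1) 0 (-1) 1) (mk (-1) 1 0 (-1) 1 0) (mk 1 (-1) 1 0 0 1) (mk 0 0 0 (-1) (-1) (-1)) (mk 1 1 0 0 0 0), mkM (mk 1 0 0 0 0 0) (mk 0 0 0 0 0 1) (mk 0 1 0 0 0 0) (mk 0 0 1 0 0 0) (mk 0 0 0 (-1) 0 0) (mk 0 0 0 0 1 0)),
  (mkM (mk (-1) 0 1 1 0 0) (mk 0 0 (-1) 0 1 (-1)) (mk (-1) 1 0 (-1) (-1) 0) (mk 1 (-1) 1 0 0 (-1)) (mk 0 0 0 (-1) 1 1) (mk 1 1 0 0 0 0), mkM (mk 1 0 0 0 0 0) (mk 0 0 0 0 0 1) (mk 0 1 0 0 0 0) (mk 0 0 1 0 0 0) (mk 0 0 0 1 0 0) (mk 0 0 0 0 (-1) 0)),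
  (mkM (mk (-1) 0 1 1 0 0) (mk 0 0 (-1) 0 1 (-1)) (mk (-1) 1 0 (-1) 0 1) (mk 1 (-1) 1 0 1 0) (mk 0 0 0 (-1) (-1) (-1)) (mk 1 1 0 0 0 0), mkM (mk 1 0 0 0 0 0) (mk 0 0 0 0 0 1) (mk 0 1 0 0 0 0) (mk 0 0 1 0 0 0) (mk 0 0 0 0 1 0) (mk 0 0 0 (-1) 0 0)),
  (mkM (mk (-1) 0 1 1 0 0) (mk 0 0 (-1) 0 1 1) (mk (-1) 1 0 (-1) (-1) 0) (mk 1 (-1) 1 0 0 1) (mk 0 0 0 (-1) 1 (-1)) (mk 1 1 0 0 0 0), mkM (mk 1 0 0 0 0 0) (mk 0 0 0 0 0 1) (mk 0 1 0 0 0 0) (mk 0 0 1 0 0 0) (mk 0 0 0 1 0 0) (mk 0 0 0 0 1 0)),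
  (mkM (mk (-1) 0 1 1 0 0) (mk 0 0 (-1) 0 1 1) (mk (-1) 1 0 (-1) 0 (-1)) (mk 1 (-1) 1 0 1 0) (mk 0 0 0 (-1) (-1) 1) (mk 1 1 0 0 0 0), mkM (mk 1 0 0 0 0 0) (mk 0 0 0 0 0 1) (mk 0 1 0 0 0 0) (mk 0 0 1 0 0 0) (mk 0 0 0 0 1 0) (mk 0 0 0 1 0 0)),
  (mkM (mk (-1) 0 1 1 0 0) (mk 0 0 0 (-1) (-1) (-1)) (mk (-1) 1 (-1) 0 0 1) (mk 1 (-1) 0 1 (-1) 0) (mk 0 0 (-1) 0 1 (-1)) (mk 1 1 0 0 0 0), mkM (mk 1 0 0 0 0 0) (mk 0 0 0 0 0 1) (mk 0 0 1 0 0 0) (mk 0 1 0 0 0 0) (mk 0 0 0 0 (-1) 0) (mk 0 0 0 (-1) 0 0)),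
  (mkM (mk (-1) 0 1 1 0 0) (mk 0 0 0 (-1) (-1) (-1)) (mk (-1) 1 (-1) 0 1 0) (mk 1 (-1) 0 1 0 (-1)) (mk 0 0 (-1) 0 (-1) 1) (mk 1 1 0 0 0 0), mkM (mk 1 0 0 0 0 0) (mk 0 0 0 0 0 1) (mk 0 0 1 0 0 0) (mk 0 1 0 0 0 0) (mk 0 0 0 (-1) 0 0) (mk 0 0 0 0 (-1) 0)),
  (mkM (mk (-1) 0 1 1 0 0) (mk 0 0 0 (-1) (-1) 1) (mk (-1) 1 (-1) 0 0 (-1)) (mk 1 (-1) 0 1 (-1) 0) (mk 0 0 (-1) 0 1 1) (mk 1 1 0 0 0 0), mkM (mk 1 0 0 0 0 0) (mk 0 0 0 0 0 1) (mk 0 0 1 0 0 0) (mk 0 1 0 0 0 0) (mk 0 0 0 0 (-1) 0) (mk 0 0 0 1 0 0)),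
  (mkM (mk (-1) 0 1 1 0 0) (mk 0 0 0 (-1) (-1) 1) (mk (-1) 1 (-1) 0 1 0) (mk 1 (-1) 0 1 0 1) (mk 0 0 (-1) 0 (-1) (-1)) (mk 1 1 0 0 0 0), mkM (mk 1 0 0 0 0 0) (mk 0 0 0 0 0 1) (mk 0 0 1 0 0 0) (mk 0 1 0 0 0 0) (mk 0 0 0 (-1) 0 0) (mk 0 0 0 0 1 0)),
  (mkM (mk (-1) 0 1 1 0 0) (mk 0 0 0 (-1) 1 (-1)) (mk (-1) 1 (-1) 0 (-1) 0) (mk 1 (-1) 0 1 0 (-1)) (mk 0 0 (-1) 0 1 1) (mk 1 1 0 0 0 0), mkM (mk 1 0 0 0 0 0) (mk 0 0 0 0 0 1) (mk 0 0 1 0 0 0) (mk 0 1 0 0 0 0) (mk 0 0 0 1 0 0) (mk 0 0 0 0 (-1) 0)),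
  (mkM (mk (-1) 0 1 1 0 0) (mk 0 0 0 (-1) 1 (-1)) (mk (-1) 1 (-1) 0 0 1) (mk 1 (-1) 0 1 1 0) (mk 0 0 (-1) 0 (-1) (-1)) (mk 1 1 0 0 0 0), mkM (mk 1 0 0 0 0 0) (mk 0 0 0 0 0 1) (mk 0 0 1 0 0 0) (mk 0 1 0 0 0 0) (mk 0 0 0 0 1 0) (mk 0 0 0 (-1) 0 0)),
  (mkM (mk (-1) 0 1 1 0 0) (mk 0 0 0 (-1) 1 1) (mk (-1) 1 (-1) 0 (-1) 0) (mk 1 (-1) 0 1 0 1) (mk 0 0 (-1) 0 1 (-1)) (mk 1 1 0 0 0 0), mkM (mk 1 0 0 0 0 0) (mk 0 0 0 0 0 1) (mk 0 0 1 0 0 0) (mk 0 1 0 0 0 0) (mk 0 0 0 1 0 0) (mk 0 0 0 0 1 0)),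
  (mkM (mk (-1) 0 1 1 0 0) (mk 0 0 0 (-1) 1 1) (mk (-1) 1 (-1) 0 0 (-1)) (mk 1 (-1) 0 1 1 0) (mk 0 0 (-1) 0 (-1) 1) (mk 1 1 0 0 0 0), mkM (mk 1 0 0 0 0 0) (mk 0 0 0 0 0 1) (mk 0 0 1 0 0 0) (mk 0 1 0 0 0 0) (mk 0 0 0 0 1 0) (mk 0 0 0 1 0 0))]


/-! ### Boolean checkers (fast to evaluate by `decide`) and their meanings -/

def veq (w v : Fin 6 → ℤ) : Bool :=
  (w 0 == v 0) && (w 1 == v 1) && (w 2 == v 2) && (w 3 == v 3) && (w 4 == v 4) && (w 5 == v 5)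

def cveq (w : Fin 6 → ℤ) (a b c d e f : ℤ) : Bool :=
  (w 0 == a) && (w 1 == b) && (w 2 == c) && (w 3 == d) && (w 4 == e) && (w 5 == f)

def rowsOrtho (W : Matrix (Fin 6) (Fin 6) ℤ) : Bool :=
  (List.finRange 6).all fun i => (List.finRange 6).all fun j =>
    dotv (W i) (W j) == (if i = j then 1 else 0)

def mvecEq (W : Matrix (Fin 6) (Fin 6) ℤ) (v c : Fin 6 → ℤ) : Bool :=
  (dotv (W 0) v == c 0) && (dotv (W 1) v == c 1) && (dotv (W 2) v == c 2) &&
  (dotv (W 3) v == c 3) && (dotv (W 4) v == c 4) && (dotv (W 5) v == c 5)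

def rowsEq (S : Matrix (Fin 6) (Fin 6) ℤ) (r0 r1 r2 r3 r4 r5 : Fin 6 → ℤ) : Bool :=
  veq (S 0) r0 && veq (S 1) r1 && veq (S 2) r2 && veq (S 3) r3 && veq (S 4) r4 && veq (S 5) r5

def prodEq (W B C : Matrix (Fin 6) (Fin 6) ℤ) : Bool :=
  (List.finRange 6).all fun i => (List.finRange 6).all fun j =>
    dotv (W i) (fun k => B k j) == C i j

lemma veq_eq {w v : Fin 6 → ℤ} (h : veq w v = true) : w = v := by
  simp only [veq, Bool.and_eq_true, beq_iff_eq] at h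
  obtain ⟨⟨⟨⟨⟨h0, h1⟩, h2⟩, h3⟩, h4⟩, h5⟩ := h
  funext k; fin_cases k <;> assumption

lemma cveq_eq {w v : Fin 6 → ℤ}
    (h : cveq w (v 0) (v 1) (v 2) (v 3) (v 4) (v 5) = true) : w = v := by
  simp only [cveq, Bool.and_eq_true, beq_iff_eq] at h
  obtain ⟨⟨⟨⟨⟨h0, h1⟩, h2⟩, h3⟩, h4⟩, h5⟩ := h
  funext k; fin_cases k <;> assumption

lemma orth_of {W : Matrix (Fin 6) (Fin 6) ℤ} (h : rowsOrtho W = true) : Wᵀ * W = 1 := by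
  have h' : ∀ i ∈ List.finRange 6, ∀ j ∈ List.finRange 6,
      dotv (W i) (W j) = if i = j then 1 else 0 := by
    simpa only [rowsOrtho, List.all_eq_true, beq_iff_eq] using h
  refine mul_eq_one_comm.mp ?_
  ext i j
  have hij := h' i (List.mem_finRange i) j (List.mem_finRange j)
  simp only [Matrix.mul_apply, Matrix.transpose_apply, Fin.sum_univ_six, Matrix.one_apply]
  simpa only [dotv] using hij

lemma mulVec_of {W : Matrix (Fin 6) (Fin 6) ℤ} {v c : Fin 6 → ℤ}
    (h : mvecEq W v c = true) : W.mulVec v = c := by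
  simp only [mvecEq, Bool.and_eq_true, beq_iff_eq] at h
  obtain ⟨⟨⟨⟨⟨h0, h1⟩, h2⟩, h3⟩, h4⟩, h5⟩ := h
  funext k
  fin_cases k
  · simp only [Matrix.mulVec, dotProduct, Fin.sum_univ_six]; exact h0
  · simp only [Matrix.mulVec, dotProduct, Fin.sum_univ_six]; exact h1
  · simp only [Matrix.mulVec, dotProduct, Fin.sum_univ_six]; exact h2
  · simp only [Matrix.mulVec, dotProduct, Fin.sum_univ_six]; exact h3
  · simp only [Matrix.mulVec, dotProduct, Fin.sum_univ_six]; exact h4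
  · simp only [Matrix.mulVec, dotProduct, Fin.sum_univ_six]; exact h5

lemma prod_of {W B C : Matrix (Fin 6) (Fin 6) ℤ} (h : prodEq W B C = true) : W * B = C := by
  have h' : ∀ i ∈ List.finRange 6, ∀ j ∈ List.finRange 6,
      dotv (W i) (fun k => B k j) = C i j := by
    simpa only [prodEq, List.all_eq_true, beq_iff_eq] using h
  ext i j
  have hij := h' i (List.mem_finRange i) j (List.mem_finRange j)
  simp only [Matrix.mul_apply, Fin.sum_univ_six]
  simpa only [dotv] using hij

/-! ### Certified tables -/

lemma T1ok : ∀ p ∈ T1, (rowsOrtho p.2 && mvecEq p.2 p.1 c6) = true := by decide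

lemma T1cov : ∀ v ∈ L2, T1.any (fun p => veq p.1 v) = true := by decide

lemma T2ok : ∀ p ∈ T2,
    (rowsOrtho p.2 && mvecEq p.2 c6 c6 && mvecEq p.2 p.1 c1) = true := by decide

lemma T2cov : ∀ u ∈ L3, dotv c6 u = -1 → T2.any (fun p => veq p.1 u) = true := by decide

lemma TS1ok : ∀ p ∈ TS1, (rowsOrtho p.2 && prodEq p.2 A1 (fun i j => p.1 j i)) = true := by
  decide

lemma TS2ok : ∀ p ∈ TS2, (rowsOrtho p.2 && prodEq p.2 A2 (fun i j => p.1 j i)) = true := by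
  decide

/-! ### Norm-based membership -/

lemma aux2 : ∀ a ∈ r5, ∀ b ∈ r5, ∀ c ∈ r5, ∀ d ∈ r5, ∀ e ∈ r5, ∀ f ∈ r5,
    a*a + b*b + c*c + d*d + e*e + f*f = 2 →
    L2.any (fun w => cveq w a b c d e f) = true := by decide

lemma aux3 : ∀ a ∈ r5, ∀ b ∈ r5, ∀ c ∈ r5, ∀ d ∈ r5, ∀ e ∈ r5, ∀ f ∈ r5,
    a*a + b*b + c*c + d*d + e*e + f*f = 3 →
    L3.any (fun w => cveq w a b c d e f) = true := by decide

lemma aux4 : ∀ a ∈ r5, ∀ b ∈ r5, ∀ c ∈ r5, ∀ d ∈ r5, ∀ e ∈ r5, ∀ f ∈ r5,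
    a*a + b*b + c*c + d*d + e*e + f*f = 4 →
    L4.any (fun w => cveq w a b c d e f) = true := by decide

lemma memL3a : ∀ b ∈ L3, dotv c1 b = -1 → dotv c6 b = 0 → b ∈ L3a := by decide

lemma memL4b : ∀ b ∈ L4, dotv c1 b = 0 → dotv c6 b = 0 → b ∈ L4b := by decide

/-! ### The main enumeration -/

lemma enum : ∀ b1 ∈ L3a, ∀ b2 ∈ L4b, dotv b1 b2 = -1 →
    ∀ b3 ∈ L4b, dotv b2 b3 = -2 → dotv b1 b3 = 0 →
    ∀ b4 ∈ L3a, dotv b3 b4 = -1 → dotv b1 b4 = 0 → dotv b2 b4 = 0 →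
    (TS1.any (fun p => rowsEq p.1 c1 b1 b2 b3 b4 c6) ||
     TS2.any (fun p => rowsEq p.1 c1 b1 b2 b3 b4 c6)) = true := by decide

/-! ### Generic facts about lattice embeddings -/

lemma gram_entry (A : Matrix (Fin 6) (Fin 6) ℤ) (h : Aᵀ * A = Qplus) (i j : Fin 6) :
    dotv (colv A i) (colv A j) = Qplus i j := by
  have h' := congrFun (congrFun h i) j
  simp only [Matrix.mul_apply, Matrix.transpose_apply, Fin.sum_univ_six] at h'
  simpa [dotv, colv] using h'

lemma mem_r5 (x : ℤ) (h : x * x ≤ 4) : x ∈ r5 := by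
  have h1 : -2 ≤ x := by nlinarith
  have h2 : x ≤ 2 := by nlinarith
  unfold r5
  interval_cases x <;> decide

lemma col_bound (A : Matrix (Fin 6) (Fin 6) ℤ) (h : Aᵀ * A = Qplus) (j k : Fin 6) :
    A k j * A k j ≤ 4 := by
  have hg := gram_entry A h j j
  have hq : Qplus j j ≤ 4 := by fin_cases j <;> decide
  have hs : A k j * A k j ≤ ∑ i, A i j * A i j :=
    Finset.single_le_sum (fun i _ => mul_self_nonneg (A i j)) (Finset.mem_univ k)
  have he : (∑ i, A i j * A i j) = dotv (colv A j) (colv A j) := by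
    simp [Fin.sum_univ_six, dotv, colv]
  rw [he, hg] at hs
  omega

lemma col_mem2 (v : Fin 6 → ℤ) (hb : ∀ k, v k ∈ r5) (hn : dotv v v = 2) : v ∈ L2 := by
  have h := aux2 (v 0) (hb 0) (v 1) (hb 1) (v 2) (hb 2) (v 3) (hb 3) (v 4) (hb 4) (v 5) (hb 5)
    (by simpa only [dotv] using hn)
  obtain ⟨w, hw, hweq⟩ := List.any_eq_true.mp h
  exact cveq_eq hweq ▸ hw

lemma col_mem3 (v : Fin 6 → ℤ) (hb : ∀ k, v k ∈ r5) (hn : dotv v v = 3) : v ∈ L3 := by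
  have h := aux3 (v 0) (hb 0) (v 1) (hb 1) (v 2) (hb 2) (v 3) (hb 3) (v 4) (hb 4) (v 5) (hb 5)
    (by simpa only [dotv] using hn)
  obtain ⟨w, hw, hweq⟩ := List.any_eq_true.mp h
  exact cveq_eq hweq ▸ hw

lemma col_mem4 (v : Fin 6 → ℤ) (hb : ∀ k, v k ∈ r5) (hn : dotv v v = 4) : v ∈ L4 := by
  have h := aux4 (v 0) (hb 0) (v 1) (hb 1) (v 2) (hb 2) (v 3) (hb 3) (v 4) (hb 4) (v 5) (hb 5)
    (by simpa only [dotv] using hn)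
  obtain ⟨w, hw, hweq⟩ := List.any_eq_true.mp h
  exact cveq_eq hweq ▸ hw

lemma step1 : ∀ v ∈ L2, ∃ W : Matrix (Fin 6) (Fin 6) ℤ, Wᵀ * W = 1 ∧ W.mulVec v = c6 := by
  intro v hv
  obtain ⟨p, hp, hveq⟩ := List.any_eq_true.mp (T1cov v hv)
  have h12 := T1ok p hp
  rw [Bool.and_eq_true] at h12
  obtain ⟨h1, h2⟩ := h12
  exact ⟨p.2, orth_of h1, veq_eq hveq ▸ mulVec_of h2⟩

lemma step2 : ∀ u ∈ L3, dotv c6 u = -1 →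
    ∃ W : Matrix (Fin 6) (Fin 6) ℤ, Wᵀ * W = 1 ∧ W.mulVec c6 = c6 ∧ W.mulVec u = c1 := by
  intro u hu hd
  obtain ⟨p, hp, hveq⟩ := List.any_eq_true.mp (T2cov u hu hd)
  have h123 := T2ok p hp
  rw [Bool.and_eq_true, Bool.and_eq_true] at h123
  obtain ⟨⟨h1, h2⟩, h3⟩ := h123
  exact ⟨p.2, orth_of h1, mulVec_of h2, veq_eq hveq ▸ mulVec_of h3⟩

lemma col_mul (W A : Matrix (Fin 6) (Fin 6) ℤ) (j : Fin 6) :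
    colv (W * A) j = W.mulVec (colv A j) := by
  funext i
  simp [colv, Matrix.mul_apply, Matrix.mulVec, dotProduct]

lemma gram_conj (W A : Matrix (Fin 6) (Fin 6) ℤ) (hW : Wᵀ * W = 1) (h : Aᵀ * A = Qplus) :
    (W * A)ᵀ * (W * A) = Qplus := by
  rw [Matrix.transpose_mul, Matrix.mul_assoc, ← Matrix.mul_assoc Wᵀ W A, hW, Matrix.one_mul, h]

lemma transpose_eq_of_rowsEq (S B : Matrix (Fin 6) (Fin 6) ℤ)
    (h : rowsEq S (colv B 0) (colv B 1) (colv B 2) (colv B 3) (colv B 4) (colv B 5) = true) :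
    Sᵀ = B := by
  simp only [rowsEq, Bool.and_eq_true] at h
  obtain ⟨⟨⟨⟨⟨h0, h1⟩, h2⟩, h3⟩, h4⟩, h5⟩ := h
  ext i j
  fin_cases j
  · exact congrFun (veq_eq h0) i
  · exact congrFun (veq_eq h1) i
  · exact congrFun (veq_eq h2) i
  · exact congrFun (veq_eq h3) i
  · exact congrFun (veq_eq h4) i
  · exact congrFun (veq_eq h5) i

/-- `A₁` and `A₂` are lattice embeddings of `(ℤ⁶, Q₊)` into
`(ℤ⁶, Id)`, and every lattice embedding `A` (i.e. `AᵀA = Q₊`) agrees with `A₁`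
or `A₂` up to an automorphism `U` of the standard lattice `ℤ⁶`. -/
theorem lattice_embeddings_12a1105 :
    A1ᵀ * A1 = Qplus ∧ A2ᵀ * A2 = Qplus ∧
    ∀ A : Matrix (Fin 6) (Fin 6) ℤ, Aᵀ * A = Qplus →
      ∃ U : Matrix (Fin 6) (Fin 6) ℤ, Uᵀ * U = 1 ∧ (A = U * A1 ∨ A = U * A2) := by
  refine ⟨by decide, by decide, ?_⟩
  intro A hA
  -- normalize column 5
  have h5 : colv A 5 ∈ L2 :=
    col_mem2 _ (fun k => mem_r5 _ (col_bound A hA 5 k))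
      (by have := gram_entry A hA 5 5; rwa [show Qplus 5 5 = 2 by decide] at this)
  obtain ⟨W1, hW1, hW1v⟩ := step1 _ h5
  have hA' : (W1 * A)ᵀ * (W1 * A) = Qplus := gram_conj W1 A hW1 hA
  have h5' : colv (W1 * A) 5 = c6 := (col_mul W1 A 5).trans hW1v
  -- normalize column 0
  have h0' : colv (W1 * A) 0 ∈ L3 :=
    col_mem3 _ (fun k => mem_r5 _ (col_bound _ hA' 0 k))
      (by have := gram_entry _ hA' 0 0; rwa [show Qplus 0 0 = 3 by decide] at this)
  have hd0 : dotv c6 (colv (W1 * A) 0) = -1 := by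
    have := gram_entry _ hA' 5 0
    rw [h5'] at this
    rwa [show Qplus 5 0 = -1 by decide] at this
  obtain ⟨W2, hW2, hW2f, hW2m⟩ := step2 _ h0' hd0
  have hA'' : (W2 * (W1 * A))ᵀ * (W2 * (W1 * A)) = Qplus := gram_conj W2 _ hW2 hA'
  set B := W2 * (W1 * A) with hB
  have hc0 : colv B 0 = c1 := (col_mul W2 _ 0).trans hW2m
  have hc5 : colv B 5 = c6 := by
    rw [hB, col_mul, h5']; exact hW2f
  have g := gram_entry B hA''
  have hb1 : colv B 1 ∈ L3a := by
    refine memL3a _ (col_mem3 _ (fun k => mem_r5 _ (col_bound B hA'' 1 k))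
      (by have := g 1 1; rwa [show Qplus 1 1 = 3 by decide] at this)) ?_ ?_
    · have := g 0 1; rw [hc0] at this; rwa [show Qplus 0 1 = -1 by decide] at this
    · have := g 5 1; rw [hc5] at this; rwa [show Qplus 5 1 = 0 by decide] at this
  have hb2 : colv B 2 ∈ L4b := by
    refine memL4b _ (col_mem4 _ (fun k => mem_r5 _ (col_bound B hA'' 2 k))
      (by have := g 2 2; rwa [show Qplus 2 2 = 4 by decide] at this)) ?_ ?_
    · have := g 0 2; rw [hc0] at this; rwa [show Qplus 0 2 = 0 by decide] at this
    · have := g 5 2; rw [hc5] at this; rwa [show Qplus 5 2 = 0 by decide] at this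
  have hb3 : colv B 3 ∈ L4b := by
    refine memL4b _ (col_mem4 _ (fun k => mem_r5 _ (col_bound B hA'' 3 k))
      (by have := g 3 3; rwa [show Qplus 3 3 = 4 by decide] at this)) ?_ ?_
    · have := g 0 3; rw [hc0] at this; rwa [show Qplus 0 3 = 0 by decide] at this
    · have := g 5 3; rw [hc5] at this; rwa [show Qplus 5 3 = 0 by decide] at this
  have hb4 : colv B 4 ∈ L3a := by
    refine memL3a _ (col_mem3 _ (fun k => mem_r5 _ (col_bound B hA'' 4 k))
      (by have := g 4 4; rwa [show Qplus 4 4 = 3 by decide] at this)) ?_ ?_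
    · have := g 0 4; rw [hc0] at this; rwa [show Qplus 0 4 = -1 by decide] at this
    · have := g 5 4; rw [hc5] at this; rwa [show Qplus 5 4 = 0 by decide] at this
  have d12 : dotv (colv B 1) (colv B 2) = -1 := by
    have := g 1 2; rwa [show Qplus 1 2 = -1 by decide] at this
  have d23 : dotv (colv B 2) (colv B 3) = -2 := by
    have := g 2 3; rwa [show Qplus 2 3 = -2 by decide] at this
  have d13 : dotv (colv B 1) (colv B 3) = 0 := by
    have := g 1 3; rwa [show Qplus 1 3 = 0 by decide] at this
  have d34 : dotv (colv B 3) (colv B 4) = -1 := by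
    have := g 3 4; rwa [show Qplus 3 4 = -1 by decide] at this
  have d14 : dotv (colv B 1) (colv B 4) = 0 := by
    have := g 1 4; rwa [show Qplus 1 4 = 0 by decide] at this
  have d24 : dotv (colv B 2) (colv B 4) = 0 := by
    have := g 2 4; rwa [show Qplus 2 4 = 0 by decide] at this
  have key := enum _ hb1 _ hb2 d12 _ hb3 d23 d13 _ hb4 d34 d14 d24
  have hW1' : W1 * W1ᵀ = 1 := mul_eq_one_comm.mp hW1
  have hW2' : W2 * W2ᵀ = 1 := mul_eq_one_comm.mp hW2
  have hback : W1ᵀ * (W2ᵀ * B) = A := by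
    rw [hB, ← Matrix.mul_assoc W2ᵀ W2, hW2, Matrix.one_mul, ← Matrix.mul_assoc, hW1,
      Matrix.one_mul]
  have hrows : ∀ p : Matrix (Fin 6) (Fin 6) ℤ × Matrix (Fin 6) (Fin 6) ℤ,
      rowsEq p.1 c1 (colv B 1) (colv B 2) (colv B 3) (colv B 4) c6 = true → p.1ᵀ = B := by
    intro p hp
    refine transpose_eq_of_rowsEq p.1 B ?_
    rw [hc0, hc5]
    exact hp
  rw [Bool.or_eq_true] at key
  rcases key with hk | hk
  · obtain ⟨p, hp, hr⟩ := List.any_eq_true.mp hk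
    have h12 := TS1ok p hp
    rw [Bool.and_eq_true] at h12
    obtain ⟨h1, h2⟩ := h12
    have horth : p.2ᵀ * p.2 = 1 := orth_of h1
    have hprod : p.2 * A1 = p.1ᵀ := by
      have := prod_of h2
      rw [this]
      rfl
    have hBp : B = p.2 * A1 := by rw [hprod, hrows p hr]
    refine ⟨W1ᵀ * (W2ᵀ * p.2), ?_, Or.inl ?_⟩
    · have e1 : W1 * (W1ᵀ * (W2ᵀ * p.2)) = W2ᵀ * p.2 := by
        rw [← Matrix.mul_assoc, hW1', Matrix.one_mul]
      calc (W1ᵀ * (W2ᵀ * p.2))ᵀ * (W1ᵀ * (W2ᵀ * p.2))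
          = p.2ᵀ * (W2 * (W1 * (W1ᵀ * (W2ᵀ * p.2)))) := by
            simp only [Matrix.transpose_mul, Matrix.transpose_transpose, Matrix.mul_assoc]
        _ = p.2ᵀ * (W2 * (W2ᵀ * p.2)) := by rw [e1]
        _ = p.2ᵀ * p.2 := by rw [← Matrix.mul_assoc W2 W2ᵀ, hW2', Matrix.one_mul]
        _ = 1 := horth
    · rw [← hback, hBp]
      simp only [Matrix.mul_assoc]
  · obtain ⟨p, hp, hr⟩ := List.any_eq_true.mp hk
    have h12 := TS2ok p hp
    rw [Bool.and_eq_true] at h12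
    obtain ⟨h1, h2⟩ := h12
    have horth : p.2ᵀ * p.2 = 1 := orth_of h1
    have hprod : p.2 * A2 = p.1ᵀ := by
      have := prod_of h2
      rw [this]
      rfl
    have hBp : B = p.2 * A2 := by rw [hprod, hrows p hr]
    refine ⟨W1ᵀ * (W2ᵀ * p.2), ?_, Or.inr ?_⟩
    · have e1 : W1 * (W1ᵀ * (W2ᵀ * p.2)) = W2ᵀ * p.2 := by
        rw [← Matrix.mul_assoc, hW1', Matrix.one_mul]
      calc (W1ᵀ * (W2ᵀ * p.2))ᵀ * (W1ᵀ * (W2ᵀ * p.2))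
          = p.2ᵀ * (W2 * (W1 * (W1ᵀ * (W2ᵀ * p.2)))) := by
            simp only [Matrix.transpose_mul, Matrix.transpose_transpose, Matrix.mul_assoc]
        _ = p.2ᵀ * (W2 * (W2ᵀ * p.2)) := by rw [e1]
        _ = p.2ᵀ * p.2 := by rw [← Matrix.mul_assoc W2 W2ᵀ, hW2', Matrix.one_mul]
        _ = 1 := horth
    · rw [← hback, hBp]
      simp only [Matrix.mul_assoc]
end

section
/- Let Q₊ be the 6×6 integer matrix with rows (3,−1,0,0,−1,−1), (−1,3,−1,0,0,0), (0,−1,4,−2,0,0), (0,0,−2,4,−1,0), (−1,0,0,−1,3,0), (−1,0,0,0,0,2); let A₁ be the 6×6 integer matrix whose transpose A₁ᵀ has rows (−1,1,1,0,0,0), (0,−1,0,1,1,0), (1,0,1,0,−1,−1), (−1,−1,0,−1,0,1), (0,0,−1,1,−1,0), (1,0,0,0,0,1); let J₊ be the 6×12 integer matrix with rows (1,0,0,0,−1,1,0,0,0,0,0,0), (−1,1,0,0,0,0,0,1,0,0,0,0), (0,−1,1,0,0,0,0,0,1,0,0,1), (0,0,−1,1,0,0,0,0,0,1,0,−1), (0,0,0,−1,1,0,0,0,0,0,1,0),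 (0,0,0,0,0,−1,1,0,0,0,0,0); and let J₋ be the 6×12 integer matrix with rows (0,0,0,0,0,0,0,0,−1,1,0,1), (0,1,0,0,0,0,0,−1,1,0,0,0), (1,0,0,0,0,−1,−1,1,0,0,0,0), (0,0,0,0,1,1,1,0,0,0,−1,0), (0,0,0,1,0,0,0,0,0,−1,1,0), (0,0,1,0,0,0,0,0,0,0,0,−1). Let s̃ = (7,3,3,3,1,−3,−5,1,1,1,1,1)ᵀ ∈ ℤ¹². Then: (a) J₊·s̃ = (3,−3,2,0,−1,−2)ᵀ and J₋·s̃ = (1,3,16,−8,3,2)ᵀ; (b) there exist v, z₀ ∈ ℤ⁶ with all entries of v odd such that A₁ᵀv − (3,−3,2,0,−1,−2)ᵀ = 2·Q₊·z₀; and (c) for all w, z ∈ ℤ⁶ with all entries of w odd, A₁ᵀw − (1,3,16,−8,3,2)ᵀ ≠ 2·Q₊·z. -/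
open Matrix

/-- The oriented incidence matrix (with a row removed) `J₊` of the positive
definite checkerboard graph of `12a_{1105}`. -/
def Jplus : Matrix (Fin 6) (Fin 12) ℤ :=
  !![1, 0, 0, 0, -1, 1, 0, 0, 0, 0, 0, 0;
     -1, 1, 0, 0, 0, 0, 0, 1, 0, 0, 0, 0;
     0, -1, 1, 0, 0, 0, 0, 0, 1, 0, 0, 1;
     0, 0, -1, 1, 0, 0, 0, 0, 0, 1, 0, -1;
     0, 0, 0, -1, 1, 0, 0, 0, 0, 0, 1, 0;
     0, 0, 0, 0, 0, -1, 1, 0, 0, 0, 0, 0]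

/-- The oriented incidence matrix (with a row removed) `J₋` of the negative
definite checkerboard graph of `12a_{1105}`. -/
def Jminus : Matrix (Fin 6) (Fin 12) ℤ :=
  !![0, 0, 0, 0, 0, 0, 0, 0, -1, 1, 0, 1;
     0, 1, 0, 0, 0, 0, 0, -1, 1, 0, 0, 0;
     1, 0, 0, 0, 0, -1, -1, 1, 0, 0, 0, 0;
     0, 0, 0, 0, 1, 1, 1, 0, 0, 0, -1, 0;
     0, 0, 0, 1, 0, 0, 0, 0, 0, -1, 1, 0;
     0, 0, 1, 0, 0, 0, 0, 0, 0, 0, 0, -1]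

/-- The characteristic vector `s̃ ∈ ℤ¹²`. -/
def stilde : Fin 12 → ℤ := ![7, 3, 3, 3, 1, -3, -5, 1, 1, 1, 1, 1]

/-- (a) `J₊ s̃ = (3,-3,2,0,-1,-2)ᵀ` and `J₋ s̃ = (1,3,16,-8,3,2)ᵀ`;
(b) the class of `J₊ s̃` modulo `2Q₊ℤ⁶` lies in `S = {[A₁ᵀ v] : v odd}`; and
(c) the class of `J₋ s̃` does not lie in `S`. Hence `S` is not invariant under
the lifted amphichiral symmetry for the embedding `A₁`. -/
theorem spinc_obstruction_12a1105_A1 :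
    (Jplus.mulVec stilde = ![3, -3, 2, 0, -1, -2] ∧
      Jminus.mulVec stilde = ![1, 3, 16, -8, 3, 2]) ∧
    (∃ v z₀ : Fin 6 → ℤ, (∀ i : Fin 6, Odd (v i)) ∧
      A1ᵀ.mulVec v - ![3, -3, 2, 0, -1, -2] = (2 : ℤ) • Qplus.mulVec z₀) ∧
    (∀ w z : Fin 6 → ℤ, (∀ i : Fin 6, Odd (w i)) →
      A1ᵀ.mulVec w - ![1, 3, 16, -8, 3, 2] ≠ (2 : ℤ) • Qplus.mulVec z) := by
  refine ⟨⟨by decide, by decide⟩,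
    ⟨![-3,-3,-3,-3,1,3], ![-1,0,-1,1,0,0],
      fun i => by fin_cases i <;> rw [Int.odd_iff] <;> decide,
      by decide⟩, ?_⟩
  intro w z _ h
  rw [A1, Matrix.transpose_transpose] at h
  have h0 := congrFun h 0
  have h1 := congrFun h 1
  have h2 := congrFun h 2
  have h3 := congrFun h 3
  have h4 := congrFun h 4
  have h5 := congrFun h (Fin.succ 4)
  simp only [Qplus, Matrix.mulVec, dotProduct, Fin.sum_univ_succ,
    Finset.univ_unique, Finset.sum_singleton, Fin.default_eq_zero, Pi.sub_apply,
    Pi.smul_apply, smul_eq_mul, Matrix.of_apply, Matrix.cons_val_zero, Matrix.cons_val_one,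
    Matrix.head_cons, Matrix.tail_cons, Matrix.cons_val_succ, Matrix.cons_val_two,
    Matrix.cons_val_three, Matrix.cons_val_four, Matrix.cons_val_fin_one,
    Fin.succ_zero_eq_one] at h0 h1 h2 h3 h4 h5
  omega
end

section
/- Let Q₊ be the 6×6 integer matrix with rows (3,−1,0,0,−1,−1), (−1,3,−1,0,0,0), (0,−1,4,−2,0,0), (0,0,−2,4,−1,0), (−1,0,0,−1,3,0), (−1,0,0,0,0,2); let A₂ be the 6×6 integer matrix whose transpose A₂ᵀ has rows (−1,1,1,0,0,0), (0,−1,0,1,1,0), (−1,0,−1,−1,0,1), (1,1,0,0,1,−1), (0,0,−1,1,−1,0), (1,0,0,0,0,1); let J₊ be the 6×12 integer matrix with rows (1,0,0,0,−1,1,0,0,0,0,0,0), (−1,1,0,0,0,0,0,1,0,0,0,0), (0,−1,1,0,0,0,0,0,1,0,0,1), (0,0,−1,1,0,0,0,0,0,1,0,−1), (0,0,0,−1,1,0,0,0,0,0,1,0), (0,0,0,0,0,−1,1,0,0,0,0,0); and let J₋ be the 6×12 integer matrix with rows (0,0,0,0,0,0,0,0,−1,1,0,1), (0,1,0,0,0,0,0,−1,1,0,0,0),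 (1,0,0,0,0,−1,−1,1,0,0,0,0), (0,0,0,0,1,1,1,0,0,0,−1,0), (0,0,0,1,0,0,0,0,0,−1,1,0), (0,0,1,0,0,0,0,0,0,0,0,−1). Then there exists s̃ ∈ ℤ¹² with all entries odd such that: (a) there exist v, z₀ ∈ ℤ⁶ with all entries of v odd and A₂ᵀv − J₊·s̃ = 2·Q₊·z₀; and (b) for all w, z ∈ ℤ⁶ with all entries of w odd, A₂ᵀw − J₋·s̃ ≠ 2·Q₊·z. -/
open Matrix

/-- there is a vector `s̃ ∈ ℤ¹²` with all entries odd such that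
(a) the class of `J₊ s̃` modulo `2Q₊ℤ⁶` lies in `S = {[A₂ᵀ v] : v odd}`, while
(b) the class of `J₋ s̃` does not lie in `S`. Hence `S` is not invariant under
the lifted amphichiral symmetry for the embedding `A₂`. -/
theorem spinc_obstruction_12a1105_A2 :
    ∃ stilde : Fin 12 → ℤ, (∀ i : Fin 12, Odd (stilde i)) ∧
      (∃ v z₀ : Fin 6 → ℤ, (∀ i : Fin 6, Odd (v i)) ∧
        A2ᵀ.mulVec v - Jplus.mulVec stilde = (2 : ℤ) • Qplus.mulVec z₀) ∧
      (∀ w z : Fin 6 → ℤ, (∀ i : Fin 6, Odd (w i)) →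
        A2ᵀ.mulVec w - Jminus.mulVec stilde ≠ (2 : ℤ) • Qplus.mulVec z) := by
  refine ⟨![-1, -1, 1, 1, -3, -3, 3, 3, -1, 3, 5, -3], ?_, ?_, ?_⟩
  · intro i; fin_cases i <;> (rw [Int.odd_iff]; decide)
  · exact ⟨![3, 3, -1, 3, 3, 3], 0, fun i => by fin_cases i <;> (rw [Int.odd_iff]; decide), by decide⟩
  · intro w z hw h
    have hb := congrFun (congrArg (!![-5, -3, -4, 2, -1, 6] : Matrix (Fin 1) (Fin 6) ℤ).mulVec h) 0
    simp only [A2, Qplus, Jminus, Matrix.transpose_transpose, Matrix.mulVec,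
      dotProduct, Fin.sum_univ_succ, Finset.univ_unique, Finset.sum_const,
      Fin.sum_univ_zero, Pi.sub_apply, Pi.smul_apply, smul_eq_mul,
      Matrix.cons_val_zero, Matrix.cons_val_succ, Matrix.of_apply,
      Matrix.cons_val', Matrix.empty_val', Matrix.cons_val_fin_one,
      Matrix.head_cons, Matrix.head_fin_const, Finset.sum_singleton,
      Finset.card_singleton, one_smul] at hb
    omega
end
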